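/- arXiv:2105.10225 — 5 statements merged into one kernel-verified Lean document; each statement's English description precedes it below -/
import Mathlib

section
/- If f and f' are two feasible integer flows of the same network, then there exist finitely many directed cycles C_1, …, C_k in the residual graph D_f and positive integers λ_1, …, λ_k such that f' = f + Σ_{j=1}^k λ_j χ(C_j) and c(f') = c(f) + Σ_{j=1}^k λ_j c(f,C_j). -/
open scoped Classical
noncomputable section

/-- A network: finite directed graph with arc set `A`, lower/upper capacities `l`, `u`,
node balances `b` and arc costs `c`. -/
structure Network (V : Type) [Fintype V] [DecidableEq V] where
  A : Finset (V × V)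
  l : V × V → ℤ
  u : V × V → ℤ
  b : V → ℤ
  c : V × V → ℝ

variable {V : Type} [Fintype V] [DecidableEq V]

namespace Network

/-- No anti-parallel arcs, and `0 ≤ l ≤ u` on every arc. -/
def Wellformed (N : Network V) : Prop :=
  (∀ a ∈ N.A, (a.2, a.1) ∉ N.A) ∧ ∀ a ∈ N.A, 0 ≤ N.l a ∧ N.l a ≤ N.u a

/-- A feasible integer flow: capacity constraints, vanishing outside `A`, flow balance. -/
def Feasible (N : Network V) (f : V × V → ℤ) : Prop :=
  (∀ a ∈ N.A, N.l a ≤ f a ∧ f a ≤ N.u a) ∧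
  (∀ a, a ∉ N.A → f a = 0) ∧
  ∀ i : V, ((∑ a ∈ N.A.filter fun a => a.1 = i, f a)
         - ∑ a ∈ N.A.filter fun a => a.2 = i, f a) = N.b i

/-- The cost of a flow. -/
def cost (N : Network V) (f : V × V → ℤ) : ℝ := ∑ a ∈ N.A, N.c a * (f a : ℝ)

/-- A flow is optimal if it is feasible of minimum cost. -/
def Optimal (N : Network V) (f : V × V → ℤ) : Prop :=
  N.Feasible f ∧ ∀ g, N.Feasible g → N.cost f ≤ N.cost g

/-- The arc set `A_f` of the residual graph `D_f`. -/
def resArcs (N : Network V) (f : V × V → ℤ) : Finset (V × V) :=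
  N.A.filter (fun a => f a < N.u a) ∪ (N.A.filter fun a => N.l a < f a).image Prod.swap

/-- Residual cost of a residual arc: `c_{ij}` on forward arcs, `-c_{ji}` on backward arcs. -/
def resCost (N : Network V) (a : V × V) : ℝ :=
  if a ∈ N.A then N.c a else -N.c (a.2, a.1)

/-- Residual capacity of a residual arc. -/
def resCap (N : Network V) (f : V × V → ℤ) (a : V × V) : ℤ :=
  if a ∈ N.A then N.u a - f a else f (a.2, a.1) - N.l (a.2, a.1)

/-- Reduced cost of an arc of `A` w.r.t. node potentials `y`. -/
def redCost (N : Network V) (y : V → ℝ) (a : V × V) : ℝ := N.c a + y a.1 - y a.2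

/-- Residual reduced cost of a residual arc w.r.t. node potentials `y`. -/
def resRedCost (N : Network V) (y : V → ℝ) (a : V × V) : ℝ := N.resCost a + y a.1 - y a.2

/-- `y` is an optimal node potential for `f`. -/
def OptPotential (N : Network V) (f : V × V → ℤ) (y : V → ℝ) : Prop :=
  ∀ a ∈ N.resArcs f, 0 ≤ N.resRedCost y a

end Network

/-- A (simple, directed) cycle: a nonempty duplicate-free list of at least two vertices,
traversed cyclically. -/
structure Cyc (V : Type) where
  verts : List V
  nodup : verts.Nodup
  two_le : 2 ≤ verts.length

/-- The arcs of a cycle: consecutive (cyclic) pairs of vertices. -/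
def Cyc.arcs (C : Cyc V) : Finset (V × V) :=
  (C.verts.zip (C.verts.rotate 1)).toFinset

/-- A cycle is proper if it contains no pair of anti-parallel arcs. -/
def Cyc.Proper (C : Cyc V) : Prop := ∀ a ∈ C.arcs, (a.2, a.1) ∉ C.arcs

/-- The incidence vector `χ(C)` of a cycle. -/
def Cyc.chi (C : Cyc V) : V × V → ℤ :=
  fun a => if a ∈ C.arcs then 1 else if (a.2, a.1) ∈ C.arcs then -1 else 0

namespace Network

/-- `C` is a directed cycle of the residual graph `D_f`. -/
def IsResCycle (N : Network V) (f : V × V → ℤ) (C : Cyc V) : Prop :=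
  ∀ a ∈ C.arcs, a ∈ N.resArcs f

/-- The cost `c(f,C)` of a cycle in the residual graph. -/
def cycCost (N : Network V) (C : Cyc V) : ℝ := ∑ a ∈ C.arcs, N.resCost a

end Network

namespace Network

/-- The incidence vector `χ(C) ∈ {−1,0,1}^A` of a residual cycle, as a vector indexed by
the arcs of the network (zero outside `A`). -/
def chi (N : Network V) (C : Cyc V) : V × V → ℤ :=
  fun a => if a ∈ N.A then C.chi a else 0

end Network

/-!
The difference `d = f' - f` is an integer circulation supported on `A`. Moving its negative
part onto the reversed arcs, `h(i,j) = (d(i,j) - d(j,i))⁺`, gives a nonnegative integer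
circulation supported on residual arcs of `f` that never uses an arc together with its reverse.
Such a circulation is a sum of indicators of simple cycles: by conservation a walk along
positive arcs never gets stuck, so it closes up into a cycle (a periodic orbit of a successor
map), which is subtracted before recursing on the total flow. On `A` each of these cycles has
`χ(C) = 𝟙_C - 𝟙_{reverse of C}`, so the indicators sum to `d` there, and the flow and cost
identities hold with all `λ_j = 1`.
-/

theorem Function.exists_iterate_mem_periodicPts {α : Type*} [Finite α] (f : α → α) (x : α) :
    ∃ m, f^[m] x ∈ Function.periodicPts f := by
  obtain ⟨m, n, hmn, heq⟩ := Finite.exists_ne_map_eq_of_infinite (f^[·] x)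
  wlog hlt : m < n generalizing m n
  · exact this n m hmn.symm heq.symm (by omega)
  refine ⟨m, Function.mk_mem_periodicPts (Nat.sub_pos_of_lt hlt) ?_⟩
  rw [Function.IsPeriodicPt, Function.IsFixedPt, ← Function.iterate_add_apply,
    Nat.sub_add_cancel hlt.le]
  exact heq.symm

namespace Cyc

variable {α : Type}

theorem zip_rotate_nodup (C : Cyc α) : (C.verts.zip (C.verts.rotate 1)).Nodup :=
  .of_map Prod.fst (by rw [List.map_fst_zip (by simp)]; exact C.nodup)

variable [DecidableEq α]

theorem sum_arcs_fst {M : Type*} [AddCommMonoid M] (C : Cyc α) (g : α → M) :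
    ∑ a ∈ C.arcs, g a.1 = ∑ v ∈ C.verts.toFinset, g v := by
  rw [arcs, List.sum_toFinset _ C.zip_rotate_nodup, ← Function.comp_def g, ← List.map_map,
    List.map_fst_zip (by simp), List.sum_toFinset _ C.nodup]

theorem sum_arcs_snd {M : Type*} [AddCommMonoid M] (C : Cyc α) (g : α → M) :
    ∑ a ∈ C.arcs, g a.2 = ∑ v ∈ C.verts.toFinset, g v := by
  rw [arcs, List.sum_toFinset _ C.zip_rotate_nodup, ← Function.comp_def g, ← List.map_map,
    List.map_snd_zip (by simp), ((C.verts.rotate_perm 1).map g).sum_eq,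
    List.sum_toFinset _ C.nodup]

theorem arcs_nonempty (C : Cyc α) : C.arcs.Nonempty := by
  rw [← Finset.card_pos, arcs, List.toFinset_card_of_nodup C.zip_rotate_nodup, List.length_zip,
    List.length_rotate, min_self]
  exact lt_of_lt_of_le two_pos C.two_le

theorem chi_eq_sub (C : Cyc α) (hC : C.Proper) (a : α × α) :
    C.chi a = (if a ∈ C.arcs then 1 else 0) - if (a.2, a.1) ∈ C.arcs then 1 else 0 := by
  by_cases ha : a ∈ C.arcs
  · simp [chi, ha, hC a ha]
  · by_cases hb : (a.2, a.1) ∈ C.arcs <;> simp [chi, ha, hb]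

theorem exists_periodicOrbit (σ : α → α) (y : α) (hp : 2 ≤ Function.minimalPeriod σ y) :
    ∃ C : Cyc α, ∀ a ∈ C.arcs, ∃ n, a = (σ^[n] y, σ^[n + 1] y) := by
  set p := Function.minimalPeriod σ y with hp_def
  obtain ⟨q, hq⟩ : ∃ q, p = q + 1 := ⟨p - 1, by omega⟩
  let g : ℕ → α := (σ^[·] y)
  have hnodup : ((List.range p).map g).Nodup :=
    List.nodup_range.map_on fun i hi j hj hij =>
      Function.iterate_injOn_Iio_minimalPeriod (List.mem_range.mp hi) (List.mem_range.mp hj) hij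
  have hrot : ((List.range p).map g).rotate 1 = (List.range p).map (g ∘ Nat.succ) := by
    have hwrap : g (q + 1) = g 0 := by
      show σ^[q + 1] y = y
      rw [← hq, hp_def, Function.iterate_minimalPeriod]
    conv_lhs => rw [hq, List.range_succ_eq_map, List.map_cons, List.rotate_cons_succ,
      List.rotate_zero, List.map_map, ← hwrap]
    rw [hq, List.range_succ, List.map_append]
    rfl
  refine ⟨⟨_, hnodup, by simpa using hp⟩, fun a ha => ?_⟩
  simp only [arcs, hrot, List.zip_map', List.mem_toFinset, List.mem_map] at ha
  obtain ⟨n, -, rfl⟩ := ha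
  exact ⟨n, rfl⟩

end Cyc

section Circulation

open Finset

variable {α : Type} [Fintype α]

def IsCirculation {M : Type*} [AddCommMonoid M] (h : α × α → M) : Prop :=
  ∀ v, ∑ w, h (v, w) = ∑ u, h (u, v)

theorem IsCirculation.of_add {M : Type*} [AddCancelCommMonoid M] {h g : α × α → M}
    (hhg : IsCirculation (h + g)) (hg : IsCirculation g) : IsCirculation h := fun v =>
  add_right_cancel (b := ∑ w, g (v, w)) <| by
    simpa only [Pi.add_apply, sum_add_distrib, hg v] using hhg v

theorem IsCirculation.toNat_skew {d : α × α → ℤ} (hd : IsCirculation d) :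
    IsCirculation fun a => (d a - d a.swap).toNat := by
  intro v
  have key : ∑ w, ((d (v, w) - d (w, v)).toNat : ℤ) - ∑ w, ((d (w, v) - d (v, w)).toNat : ℤ) =
      ∑ w, d (v, w) - ∑ w, d (w, v) := by
    rw [← sum_sub_distrib, ← sum_sub_distrib]
    refine sum_congr rfl fun w _ => ?_
    rw [← neg_sub (d (v, w)), Int.toNat_sub_toNat_neg]
  rw [hd v, sub_self, sub_eq_zero] at key
  exact_mod_cast key

theorem IsCirculation.exists_succ_pos {h : α × α → ℕ} (hh : IsCirculation h) {v w : α}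
    (hvw : 0 < h (v, w)) : ∃ x, 0 < h (w, x) := by
  have hin : 0 < ∑ u, h (u, w) := sum_pos_iff.mpr ⟨v, mem_univ v, hvw⟩
  rw [← hh w] at hin
  obtain ⟨x, -, hx⟩ := sum_pos_iff.mp hin
  exact ⟨x, hx⟩

variable [DecidableEq α]

theorem Finset.card_filter_mk_left_mem (s : Finset (α × α)) (v : α) :
    #{w | (v, w) ∈ s} = #{a ∈ s | a.1 = v} := by
  refine card_nbij' (Prod.mk v) Prod.snd ?_ ?_ ?_ ?_ <;> intro a ha <;>
    simp only [coe_filter, Set.mem_ofPred_eq, mem_univ, true_and] at ha ⊢ <;> grind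

theorem Finset.card_filter_mk_right_mem (s : Finset (α × α)) (v : α) :
    #{u | (u, v) ∈ s} = #{a ∈ s | a.2 = v} := by
  refine card_nbij' (·, v) Prod.fst ?_ ?_ ?_ ?_ <;> intro a ha <;>
    simp only [coe_filter, Set.mem_ofPred_eq, mem_univ, true_and] at ha ⊢ <;> grind

theorem Finset.sum_filter_fst_eq_sum {M : Type*} [AddCommMonoid M] {s : Finset (α × α)}
    {f : α × α → M} (hf : ∀ a ∉ s, f a = 0) (v : α) :
    ∑ a ∈ s with a.1 = v, f a = ∑ w, f (v, w) := by
  rw [sum_filter, sum_subset (subset_univ s) fun a _ ha => by simp [hf a ha],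
    Fintype.sum_prod_type, sum_eq_single v (fun x _ hx => by simp [hx]) (by simp)]
  simp

theorem Finset.sum_filter_snd_eq_sum {M : Type*} [AddCommMonoid M] {s : Finset (α × α)}
    {f : α × α → M} (hf : ∀ a ∉ s, f a = 0) (v : α) :
    ∑ a ∈ s with a.2 = v, f a = ∑ u, f (u, v) := by
  rw [sum_filter, sum_subset (subset_univ s) fun a _ ha => by simp [hf a ha],
    Fintype.sum_prod_type]
  simp

theorem Cyc.isCirculation_indicator (C : Cyc α) :
    IsCirculation fun a => if a ∈ C.arcs then (1 : ℕ) else 0 := by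
  intro v
  simp only [sum_boole, Nat.cast_id]
  rw [card_filter_mk_left_mem, card_filter_mk_right_mem, card_filter, card_filter,
    C.sum_arcs_fst fun x => if x = v then 1 else 0, C.sum_arcs_snd fun x => if x = v then 1 else 0]

theorem IsCirculation.exists_cyc {h : α × α → ℕ} (hh : IsCirculation h)
    (hloop : ∀ v, h (v, v) = 0) {a₀ : α × α} (ha₀ : 0 < h a₀) :
    ∃ C : Cyc α, ∀ a ∈ C.arcs, 0 < h a := by
  let S : Set α := {v | ∃ w, 0 < h (v, w)}
  let σ : α → α := fun v => if hv : v ∈ S then hv.choose else v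
  have hσ : ∀ v ∈ S, 0 < h (v, σ v) := fun v hv => by
    simp only [σ, dif_pos hv]
    exact hv.choose_spec
  have hmaps : ∀ n, σ^[n] a₀.1 ∈ S := by
    intro n
    induction n with
    | zero => exact ⟨a₀.2, ha₀⟩
    | succ n ih =>
      rw [Function.iterate_succ_apply']
      exact hh.exists_succ_pos (hσ _ ih)
  obtain ⟨m, hm⟩ := Function.exists_iterate_mem_periodicPts σ a₀.1
  set y := σ^[m] a₀.1
  have horbit : ∀ n, 0 < h (σ^[n] y, σ^[n + 1] y) := fun n => by
    rw [Function.iterate_succ_apply', ← Function.iterate_add_apply]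
    exact hσ _ (hmaps _)
  have hp : 2 ≤ Function.minimalPeriod σ y := by
    have hne : Function.minimalPeriod σ y ≠ 1 := fun h1 => by
      have hfix : σ y = y := Function.minimalPeriod_eq_one_iff_isFixedPt.mp h1
      simpa [hfix, hloop] using horbit 0
    have := Function.minimalPeriod_pos_of_mem_periodicPts hm
    omega
  obtain ⟨C, hC⟩ := Cyc.exists_periodicOrbit σ y hp
  exact ⟨C, fun a ha => by obtain ⟨n, rfl⟩ := hC a ha; exact horbit n⟩

theorem IsCirculation.exists_cyc_decomposition {h : α × α → ℕ} (hh : IsCirculation h)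
    (hloop : ∀ v, h (v, v) = 0) :
    ∃ (k : ℕ) (C : Fin k → Cyc α), (∀ j, ∀ a ∈ (C j).arcs, 0 < h a) ∧
      ∀ a, h a = ∑ j, if a ∈ (C j).arcs then 1 else 0 := by
  induction hs : ∑ a, h a using Nat.strong_induction_on generalizing h with
  | _ s ih =>
  by_cases hzero : h = 0
  · exact ⟨0, Fin.elim0, Fin.rec0, by simp [hzero]⟩
  obtain ⟨a₀, ha₀⟩ := Function.ne_iff.mp hzero
  obtain ⟨C₀, hC₀⟩ := hh.exists_cyc hloop (Nat.pos_of_ne_zero ha₀)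
  set ind : α × α → ℕ := fun a => if a ∈ C₀.arcs then 1 else 0
  set h' : α × α → ℕ := h - ind
  have hsplit : h = h' + ind := by
    funext a
    simp only [h', ind, Pi.add_apply, Pi.sub_apply]
    split_ifs with ha
    · have := hC₀ a ha
      omega
    · omega
  have hlt : ∑ a, h' a < s := by
    obtain ⟨a, ha⟩ := C₀.arcs_nonempty
    rw [← hs, hsplit, Pi.add_def, sum_add_distrib]
    exact Nat.lt_add_of_pos_right (sum_pos_iff.mpr ⟨a, mem_univ a, by simp [ind, ha]⟩)
  obtain ⟨k, C, hpos, hdecomp⟩ := ih _ hlt (hsplit ▸ hh |>.of_add C₀.isCirculation_indicator)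
    (fun v => by simp [h', hloop]) rfl
  refine ⟨k + 1, Fin.cons C₀ C, fun j => ?_, fun a => ?_⟩
  · induction j using Fin.cases with
    | zero => simpa using hC₀
    | succ j => simpa using fun a ha => (hpos j a ha).trans_le (Nat.sub_le _ _)
  · rw [Fin.sum_univ_succ]
    simp only [Fin.cons_zero, Fin.cons_succ, ← hdecomp]
    rw [congrFun hsplit a, Pi.add_apply, add_comm]

end Circulation

namespace Network

open Finset

theorem Feasible.sum_out_sub_sum_in {N : Network V} {f : V × V → ℤ} (hf : N.Feasible f)
    (v : V) : ∑ w, f (v, w) - ∑ u, f (u, v) = N.b v := by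
  rw [← sum_filter_fst_eq_sum hf.2.1, ← sum_filter_snd_eq_sum hf.2.1]
  exact hf.2.2 v

theorem Feasible.isCirculation_sub {N : Network V} {f f' : V × V → ℤ} (hf' : N.Feasible f')
    (hf : N.Feasible f) : IsCirculation (f' - f) := by
  intro v
  have h' := hf'.sum_out_sub_sum_in v
  have h := hf.sum_out_sub_sum_in v
  simp only [Pi.sub_apply, sum_sub_distrib]
  linarith

theorem mem_or_swap_mem_of_mem_resArcs {N : Network V} {f : V × V → ℤ} {a : V × V}
    (ha : a ∈ N.resArcs f) : a ∈ N.A ∨ (a.2, a.1) ∈ N.A := by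
  rcases mem_union.mp ha with h | h
  · exact .inl (mem_filter.mp h).1
  · obtain ⟨b, hb, rfl⟩ := mem_image.mp h
    exact .inr (mem_filter.mp hb).1

theorem mem_resArcs_of_skew_pos {N : Network V} (hanti : ∀ a ∈ N.A, (a.2, a.1) ∉ N.A)
    {f f' : V × V → ℤ} (hf : N.Feasible f) (hf' : N.Feasible f') {a : V × V}
    (ha : 0 < (f' - f) a - (f' - f) a.swap) : a ∈ N.resArcs f := by
  simp only [Pi.sub_apply, Prod.swap] at ha
  by_cases hA : a ∈ N.A
  · have hs := hanti a hA
    refine mem_union_left _ (mem_filter.mpr ⟨hA, ?_⟩)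
    have := (hf'.1 a hA).2
    rw [hf.2.1 _ hs, hf'.2.1 _ hs] at ha
    omega
  · have hs : (a.2, a.1) ∈ N.A := by
      by_contra hs
      rw [hf.2.1 _ hs, hf'.2.1 _ hs, hf.2.1 _ hA, hf'.2.1 _ hA] at ha
      omega
    refine mem_union_right _ (mem_image.mpr ⟨(a.2, a.1), mem_filter.mpr ⟨hs, ?_⟩, rfl⟩)
    have := (hf'.1 _ hs).1
    rw [hf.2.1 _ hA, hf'.2.1 _ hA] at ha
    omega

theorem cycCost_eq_sum_chi {N : Network V} (hanti : ∀ a ∈ N.A, (a.2, a.1) ∉ N.A)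
    {f : V × V → ℤ} {C : Cyc V} (hC : N.IsResCycle f C) (hP : C.Proper) :
    N.cycCost C = ∑ a ∈ N.A, N.c a * N.chi C a := by
  have hback : ∑ a ∈ C.arcs with a ∉ N.A, N.c (a.2, a.1) =
      ∑ a ∈ N.A with (a.2, a.1) ∈ C.arcs, N.c a := by
    refine sum_nbij' Prod.swap Prod.swap (fun a ha => ?_) (fun a ha => ?_)
      (fun _ _ => rfl) (fun _ _ => rfl) (fun _ _ => rfl)
    · rw [mem_filter] at ha ⊢
      exact ⟨(mem_or_swap_mem_of_mem_resArcs (hC a ha.1)).resolve_left ha.2, ha.1⟩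
    · rw [mem_filter] at ha ⊢
      exact ⟨ha.2, hanti a ha.1⟩
  have hchi : ∀ a ∈ N.A, N.c a * N.chi C a =
      (if a ∈ C.arcs then N.c a else 0) - if (a.2, a.1) ∈ C.arcs then N.c a else 0 := by
    intro a ha
    rw [chi, if_pos ha, C.chi_eq_sub hP]
    split_ifs <;> simp
  rw [sum_congr rfl hchi, sum_sub_distrib, ← sum_filter, ← sum_filter, ← hback, cycCost,
    ← sum_filter_add_sum_filter_not C.arcs (· ∈ N.A), sub_eq_add_neg, ← sum_neg_distrib]
  congr 1
  · refine sum_congr (by ext; simp [and_comm]) fun a ha => ?_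
    rw [resCost, if_pos (mem_filter.mp ha).1]
  · exact sum_congr rfl fun a ha => by rw [resCost, if_neg (mem_filter.mp ha).2]

theorem cost_eq_add_sum_cycCost {N : Network V} {f f' : V × V → ℤ} {k : ℕ}
    {C : Fin k → Cyc V} {lam : Fin k → ℤ}
    (hcyc : ∀ j, N.cycCost (C j) = ∑ a ∈ N.A, N.c a * N.chi (C j) a)
    (hflow : ∀ a ∈ N.A, f' a = f a + ∑ j, lam j * N.chi (C j) a) :
    N.cost f' = N.cost f + ∑ j, (lam j : ℝ) * N.cycCost (C j) := by
  simp only [hcyc, cost, mul_sum]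
  rw [sum_comm, ← sum_add_distrib]
  refine sum_congr rfl fun a ha => ?_
  rw [hflow a ha]
  push_cast
  rw [mul_add, mul_sum]
  congr 1
  exact sum_congr rfl fun j _ => by ring

end Network

/-- **Flow decomposition.** If `f` and `f'` are two feasible integer flows of the same
network, then there are finitely many directed cycles `C_1, …, C_k` in the residual graph
`D_f` and positive integers `λ_1, …, λ_k` with `f' = f + ∑ λ_j χ(C_j)` and
`c(f') = c(f) + ∑ λ_j c(f, C_j)`. -/
theorem flow_decomposition (N : Network V) (hN : N.Wellformed)
    (f f' : V × V → ℤ) (hf : N.Feasible f) (hf' : N.Feasible f') :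
    ∃ (k : ℕ) (C : Fin k → Cyc V) (lam : Fin k → ℤ),
      (∀ j, N.IsResCycle f (C j)) ∧ (∀ j, 0 < lam j) ∧
      (∀ a ∈ N.A, f' a = f a + ∑ j, lam j * N.chi (C j) a) ∧
      N.cost f' = N.cost f + ∑ j, (lam j : ℝ) * N.cycCost (C j) := by
  obtain ⟨hanti, -⟩ := hN
  obtain ⟨k, C, hpos, hdecomp⟩ :=
    (hf'.isCirculation_sub hf).toNat_skew.exists_cyc_decomposition (by simp)
  have hskew : ∀ j, ∀ a ∈ (C j).arcs, 0 < (f' - f) a - (f' - f) a.swap := fun j a ha => by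
    exact_mod_cast Int.lt_toNat.mp (hpos j a ha)
  have hres : ∀ j, N.IsResCycle f (C j) := fun j a ha =>
    N.mem_resArcs_of_skew_pos hanti hf hf' (hskew j a ha)
  have hproper : ∀ j, (C j).Proper := fun j ⟨x, y⟩ ha ha' => by
    have h₁ := hskew j _ ha
    have h₂ := hskew j _ ha'
    simp only [Prod.swap] at h₁ h₂
    omega
  have hflow : ∀ a ∈ N.A, f' a = f a + ∑ j, (1 : Fin k → ℤ) j * N.chi (C j) a := by
    rintro ⟨x, y⟩ ha
    have hsum : ∀ b, ∑ j, (if b ∈ (C j).arcs then 1 else 0 : ℤ) =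
        ((f' - f) b - (f' - f) b.swap).toNat := fun b => by
      exact_mod_cast (hdecomp b).symm
    have hrev := hanti _ ha
    simp only [Pi.one_apply, one_mul, Network.chi, if_pos ha, (C _).chi_eq_sub (hproper _),
      Finset.sum_sub_distrib, hsum, Pi.sub_apply, Prod.swap, hf.2.1 _ hrev, hf'.2.1 _ hrev]
    omega
  exact ⟨k, C, 1, hres, fun _ => one_pos, hflow,
    N.cost_eq_add_sum_cycCost (fun j => N.cycCost_eq_sum_chi hanti (hres j) (hproper j)) hflow⟩
end
end

section
/- Let f and f' be two optimal integer flows of the same network and let y be an optimal node potential for f. If f_{ij} ≠ f'_{ij} for some arc (i,j)∈A, then the reduced cost c̄_{ij} = c_{ij} + y_i − y_j equals 0. -/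
/-! Complementary slackness. The difference `g = f' - f` of two feasible flows is a circulation,
so the potential terms cancel in `∑ c̄ₐ gₐ`, which therefore equals `c(f') - c(f) ≤ 0`. On the other
hand every term `c̄ₐ gₐ` is nonnegative: if `gₐ > 0` then `a` is a forward residual arc of `D_f`, and
if `gₐ < 0` its reverse is a backward residual arc, so optimality of `y` fixes the sign of `c̄ₐ`.
Hence every term vanishes, and `c̄ₐ = 0` wherever `gₐ ≠ 0`. -/

open scoped Classical
noncomputable section

variable {V : Type} [Fintype V] [DecidableEq V]

theorem Finset.sum_comp_mul_eq_sum_mul_sum_fiber {ι κ R : Type*} [Fintype κ] [DecidableEq κ]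
    [CommSemiring R] (s : Finset ι) (p : ι → κ) (y : κ → R) (g : ι → R) :
    ∑ a ∈ s, y (p a) * g a = ∑ i, y i * ∑ a ∈ s with p a = i, g a := by
  rw [← Finset.sum_fiberwise s p]
  refine Finset.sum_congr rfl fun i _ => ?_
  rw [Finset.mul_sum]
  exact Finset.sum_congr rfl fun a ha => by rw [(Finset.mem_filter.mp ha).2]

namespace Network

variable (N : Network V)

def netOutflow (g : V × V → ℤ) (i : V) : ℤ :=
  (∑ a ∈ N.A with a.1 = i, g a) - ∑ a ∈ N.A with a.2 = i, g a

theorem sum_redCost_mul (y : V → ℝ) (g : V × V → ℤ) :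
    ∑ a ∈ N.A, N.redCost y a * (g a : ℝ)
      = ∑ a ∈ N.A, N.c a * (g a : ℝ) + ∑ i, y i * (N.netOutflow g i : ℝ) := by
  have hpot : ∑ a ∈ N.A, (y a.1 - y a.2) * (g a : ℝ) = ∑ i, y i * (N.netOutflow g i : ℝ) := by
    simp only [sub_mul, Finset.sum_sub_distrib, netOutflow, Int.cast_sub, Int.cast_sum, mul_sub,
      Finset.sum_comp_mul_eq_sum_mul_sum_fiber N.A Prod.fst,
      Finset.sum_comp_mul_eq_sum_mul_sum_fiber N.A Prod.snd]
  rw [← hpot, ← Finset.sum_add_distrib]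
  exact Finset.sum_congr rfl fun a _ => by rw [redCost]; ring

theorem netOutflow_sub_eq_zero {f f' : V × V → ℤ} (hf : N.Feasible f) (hf' : N.Feasible f')
    (i : V) : N.netOutflow (f' - f) i = 0 := by
  have h := hf.2.2 i
  have h' := hf'.2.2 i
  simp only [netOutflow, Pi.sub_apply, Finset.sum_sub_distrib] at h h' ⊢
  omega

theorem cost_sub_cost (f f' : V × V → ℤ) :
    N.cost f' - N.cost f = ∑ a ∈ N.A, N.c a * ((f' - f) a : ℝ) := by
  simp only [cost, ← Finset.sum_sub_distrib, Pi.sub_apply, Int.cast_sub, mul_sub]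

variable {N} {f : V × V → ℤ} {y : V → ℝ} {a : V × V}

theorem OptPotential.redCost_nonneg (hy : N.OptPotential f y) (ha : a ∈ N.A)
    (hu : f a < N.u a) : 0 ≤ N.redCost y a := by
  have h := hy a (Finset.mem_union_left _ (Finset.mem_filter.mpr ⟨ha, hu⟩))
  rwa [resRedCost, resCost, if_pos ha] at h

theorem OptPotential.redCost_nonpos (hy : N.OptPotential f y) (ha : a ∈ N.A)
    (hrev : (a.2, a.1) ∉ N.A) (hl : N.l a < f a) : N.redCost y a ≤ 0 := by
  have h := hy (a.2, a.1)
    (Finset.mem_union_right _ (Finset.mem_image.mpr ⟨a, Finset.mem_filter.mpr ⟨ha, hl⟩, rfl⟩))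
  rw [resRedCost, resCost, if_neg hrev] at h
  rw [redCost]
  linarith

theorem OptPotential.redCost_mul_sub_nonneg (hN : N.Wellformed) (hy : N.OptPotential f y)
    {f' : V × V → ℤ} (hf' : N.Feasible f') (ha : a ∈ N.A) :
    0 ≤ N.redCost y a * ((f' - f) a : ℝ) := by
  obtain ⟨hl, hu⟩ := hf'.1 a ha
  rcases lt_trichotomy (f a) (f' a) with hlt | heq | hgt
  · refine mul_nonneg (hy.redCost_nonneg ha (hlt.trans_le hu)) ?_
    exact_mod_cast (sub_pos.mpr hlt).le
  · simp [heq]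
  · refine mul_nonneg_of_nonpos_of_nonpos (hy.redCost_nonpos ha (hN.1 a ha) (hl.trans_lt hgt)) ?_
    exact_mod_cast (sub_neg.mpr hgt).le

end Network

/-- If `f` and `f'` are optimal integer flows and `y` is an optimal node potential for `f`,
then `f` and `f'` can only differ on arcs with zero reduced cost. -/
theorem redCost_eq_zero_of_flows_differ (N : Network V) (hN : N.Wellformed)
    (f f' : V × V → ℤ) (hf : N.Optimal f) (hf' : N.Optimal f')
    (y : V → ℝ) (hy : N.OptPotential f y)
    (a : V × V) (ha : a ∈ N.A) (hne : f a ≠ f' a) :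
    N.redCost y a = 0 := by
  have hterm : ∀ b ∈ N.A, 0 ≤ N.redCost y b * ((f' - f) b : ℝ) :=
    fun b hb => hy.redCost_mul_sub_nonneg hN hf'.1 hb
  have hsum : ∑ b ∈ N.A, N.redCost y b * ((f' - f) b : ℝ) = N.cost f' - N.cost f := by
    simp only [Network.sum_redCost_mul, Network.netOutflow_sub_eq_zero N hf.1 hf'.1, Int.cast_zero, mul_zero,
      Finset.sum_const_zero, add_zero, Network.cost_sub_cost]
  have hsum_nonpos : ∑ b ∈ N.A, N.redCost y b * ((f' - f) b : ℝ) ≤ 0 := by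
    linarith [hf'.2 f hf.1]
  have hzero := (Finset.sum_eq_zero_iff_of_nonneg hterm).mp
    (le_antisymm hsum_nonpos (Finset.sum_nonneg hterm)) a ha
  refine (mul_eq_zero.mp hzero).resolve_right ?_
  simpa [sub_eq_zero] using hne.symm
end
end

section
/- Let G be a finite directed graph equipped with a DFS forest (a spanning rooted forest with parent map π, preorder numbering dfs, whose tree arcs are arcs of G, and such that for every arc (i,j) of G either i and j are comparable in the ancestor order or dfs(j) < dfs(i)). If G contains a proper directed cycle, then G contains a proper backward cycle, a proper forward cycle, or a proper cross cycle with respect to this forest. -/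
open scoped Classical
noncomputable section

variable {V : Type} [Fintype V] [DecidableEq V]

/-- `Anc parent x y` : `x` is an ancestor of `y` in the rooted forest given by `parent`
(reflexively: every node is an ancestor of itself). -/
def Anc (parent : V → Option V) (x y : V) : Prop :=
  Relation.ReflTransGen (fun u v => parent u = some v) y x

/-- A DFS forest of the directed graph with arc set `E`: a spanning rooted forest (given by
the parent map) whose tree arcs are arcs of `E`, together with an injective preorder
numbering `dfs`, such that for every arc `(i,j)` of `E` either `i` and `j` are comparable
in the ancestor order or `dfs j < dfs i`. -/
structure DFSForest (V : Type) [Fintype V] [DecidableEq V] (E : Finset (V × V)) where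
  parent : V → Option V
  dfs : V → ℕ
  dfs_inj : Function.Injective dfs
  tree_arc_mem : ∀ i p, parent i = some p → (p, i) ∈ E
  dfs_parent_lt : ∀ i p, parent i = some p → dfs p < dfs i
  /-- preorder property: the dfs numbers of the subtree rooted at `v` form a consecutive
  interval starting at `dfs v`. -/
  preorder : ∀ v : V,
    (Finset.univ.filter fun u => Anc parent v u).image dfs
      = Finset.Ico (dfs v) (dfs v + (Finset.univ.filter fun u => Anc parent v u).card)
  arcs_comparable_or_lt : ∀ a ∈ E,
    Anc parent a.1 a.2 ∨ Anc parent a.2 a.1 ∨ dfs a.2 < dfs a.1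

namespace DFSForest

variable {E : Finset (V × V)}

/-- `(i,j)` is a tree arc: `i` is the parent of `j`. -/
def TreeArc (F : DFSForest V E) (a : V × V) : Prop := a ∈ E ∧ F.parent a.2 = some a.1

/-- `(i,j)` is a backward arc: `j` is a proper ancestor of `i`. -/
def BackwardArc (F : DFSForest V E) (a : V × V) : Prop :=
  a ∈ E ∧ Anc F.parent a.2 a.1 ∧ a.2 ≠ a.1

/-- A short backward arc: `(i, π i)`. -/
def ShortBackwardArc (F : DFSForest V E) (a : V × V) : Prop :=
  a ∈ E ∧ F.parent a.1 = some a.2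

/-- A long backward arc: a backward arc that is not short. -/
def LongBackwardArc (F : DFSForest V E) (a : V × V) : Prop :=
  F.BackwardArc a ∧ F.parent a.1 ≠ some a.2

/-- A forward arc: a non-tree arc `(i,j)` where `j` is a proper descendant of `i`. -/
def ForwardArc (F : DFSForest V E) (a : V × V) : Prop :=
  a ∈ E ∧ ¬ F.TreeArc a ∧ Anc F.parent a.1 a.2 ∧ a.1 ≠ a.2

/-- A cross arc: an arc whose endpoints are incomparable in the ancestor order. -/
def CrossArc (F : DFSForest V E) (a : V × V) : Prop :=
  a ∈ E ∧ ¬ Anc F.parent a.1 a.2 ∧ ¬ Anc F.parent a.2 a.1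

/-- The tree arcs of the unique tree path from an ancestor `j` down to `i`. -/
def treePathArcs (F : DFSForest V E) (j i : V) : Finset (V × V) :=
  Finset.univ.filter fun a =>
    F.parent a.2 = some a.1 ∧ Anc F.parent j a.2 ∧ Anc F.parent a.2 i ∧ a.2 ≠ j

/-- `a` is the lowest common ancestor of `i` and `j`. -/
def IsLCA (F : DFSForest V E) (a i j : V) : Prop :=
  Anc F.parent a i ∧ Anc F.parent a j ∧
    ∀ b, Anc F.parent b i → Anc F.parent b j → Anc F.parent b a

/-- A proper backward cycle: a proper cycle formed by a long backward arc `(i,j)` together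
with the unique tree path from `j` to `i`. -/
def ProperBackwardCycle (F : DFSForest V E) (C : Cyc V) : Prop :=
  C.Proper ∧ ∃ i j : V, F.LongBackwardArc (i, j) ∧
    C.arcs = insert (i, j) (F.treePathArcs j i)

/-- A proper forward cycle: a proper cycle formed by a forward arc `(i,j)` together with a
path from `j` to `i` consisting only of short backward arcs. -/
def ProperForwardCycle (F : DFSForest V E) (C : Cyc V) : Prop :=
  C.Proper ∧ ∃ (i j : V) (S : Finset (V × V)), F.ForwardArc (i, j) ∧
    (∀ e ∈ S, F.ShortBackwardArc e) ∧ C.arcs = insert (i, j) S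

/-- A proper cross cycle: a proper cycle formed by a cross arc `(i,j)`, a path from `j` to
the lowest common ancestor `a` of `i` and `j` consisting only of short backward arcs, and
the tree path from `a` to `i`. -/
def ProperCrossCycle (F : DFSForest V E) (C : Cyc V) : Prop :=
  C.Proper ∧ ∃ (i j a : V) (S : Finset (V × V)), F.CrossArc (i, j) ∧ F.IsLCA a i j ∧
    (∀ e ∈ S, F.ShortBackwardArc e) ∧
    C.arcs = insert (i, j) (S ∪ F.treePathArcs a i)

end DFSForest

/-!
Among the arcs of the proper cycle `C` that are not short backward arcs (one leaves the vertex of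
`C` with least dfs number), pick `(x, y)` whose tail `x` comes first in postorder. Following `C`
from `y` along short backward arcs leads to the tail `x'` of another such arc, and the choice of `x`
forces `x'` to be an ancestor of `x`. Hence, when `y` is a descendant of `x`, this climb passes
through `x`, and when `x` and `y` are incomparable it passes through their lowest common ancestor
`a`. The arc `(x, y)`, the climb from `y` to `a` (with `a = x`, resp. `a = y` when `y` is an
ancestor of `x`) and the tree path from `a` down to `x` then form a proper forward, cross or
backward cycle.
-/

namespace List

variable {α : Type*}

theorem mem_consecutivePairs_iff_infix {l : List α} {u v : α} :
    (u, v) ∈ l.consecutivePairs ↔ [u, v] <:+: l := by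
  induction l with
  | nil => simp
  | cons a t ih =>
    cases t with
    | nil => simp [consecutivePairs, infix_cons_iff]
    | cons b s =>
      rw [infix_cons_iff, ← ih]
      simp [consecutivePairs]

theorem pair_infix_append_cons_iff {l₁ l₂ : List α} {x u v : α} :
    [u, v] <:+: l₁ ++ x :: l₂ ↔ [u, v] <:+: l₁ ++ [x] ∨ [u, v] <:+: x :: l₂ := by
  induction l₁ with
  | nil => simp [infix_cons_iff]
  | cons b l ih =>
    cases l <;> simp_all [infix_cons_iff, or_assoc]

theorem pair_infix_pair_iff {u v x y : α} : [u, v] <:+: [x, y] ↔ u = x ∧ v = y := by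
  constructor
  · intro h
    simpa using h.eq_of_length rfl
  · rintro ⟨rfl, rfl⟩
    exact infix_refl _

theorem pair_infix_reverse_iff {l : List α} {u v : α} :
    [u, v] <:+: l.reverse ↔ [v, u] <:+: l := by
  rw [← reverse_infix, reverse_reverse]
  rfl

theorem zip_rotate_one_eq_consecutivePairs (l : List α) :
    l.zip (l.rotate 1) = (l ++ l.take 1).consecutivePairs := by
  cases l with
  | nil => rfl
  | cons a t =>
    have h := zip_append (l₁ := a :: t) (r₁ := [a]) (l₂ := t ++ [a]) (r₂ := []) (by simp)
    simpa [consecutivePairs] using h.symm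

end List

section Anc

variable {α : Type} {pr : α → Option α} {u v w : α}

theorem anc_refl (v : α) : Anc pr v v := Relation.ReflTransGen.refl

theorem anc_of_parent_eq (h : pr v = some u) : Anc pr u v := Relation.ReflTransGen.single h

theorem Anc.trans (huv : Anc pr u v) (hvw : Anc pr v w) : Anc pr u w :=
  Relation.ReflTransGen.trans hvw huv

theorem Anc.exists_parent_eq (huw : Anc pr u w) (hne : u ≠ w) :
    ∃ v, pr w = some v ∧ Anc pr u v := by
  rcases Relation.ReflTransGen.cases_head huw with rfl | h
  · exact absurd rfl hne
  · exact h

theorem Anc.of_parent_eq (huw : Anc pr u w) (hne : u ≠ w) (hw : pr w = some v) : Anc pr u v := by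
  obtain ⟨p, hp, hup⟩ := huw.exists_parent_eq hne
  exact Option.some.inj (hp.symm.trans hw) ▸ hup

theorem Anc.total (huw : Anc pr u w) (hvw : Anc pr v w) : Anc pr u v ∨ Anc pr v u :=
  Relation.ReflTransGen.total_of_right_unique
    (fun _ _ _ h₁ h₂ => Option.some.inj (h₁.symm.trans h₂)) hvw huw

end Anc

namespace Cyc

variable {α : Type} [DecidableEq α] (C : Cyc α) {u v : α}

theorem mem_arcs_iff_infix : (u, v) ∈ C.arcs ↔ [u, v] <:+: C.verts ++ C.verts.take 1 := by
  rw [arcs, List.mem_toFinset, List.zip_rotate_one_eq_consecutivePairs,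
    List.mem_consecutivePairs_iff_infix]

theorem snd_mem_verts_of_mem_arcs (h : (u, v) ∈ C.arcs) : v ∈ C.verts := by
  have hv := (C.mem_arcs_iff_infix.1 h).subset (a := v) (by simp)
  rcases List.mem_append.1 hv with hv | hv
  · exact hv
  · exact List.mem_of_mem_take hv

theorem exists_mem_arcs_of_mem (hu : u ∈ C.verts) : ∃ v, (u, v) ∈ C.arcs := by
  simp_rw [C.mem_arcs_iff_infix]
  obtain ⟨s, t, hst⟩ := List.append_of_mem hu
  rw [hst]
  cases t with
  | cons v t => exact ⟨v, List.infix_append_of_infix_left (List.infix_append' s [u, v] t)⟩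
  | nil =>
    obtain ⟨x, hx⟩ : ∃ x, (s ++ [u]).take 1 = [x] := by
      cases s <;> simp
    exact ⟨x, by rw [hx, List.append_assoc]; exact List.infix_append' s [u, x] []⟩

theorem ne_of_mem_arcs (h : (u, v) ∈ C.arcs) : u ≠ v := by
  rw [arcs, List.mem_toFinset, List.mem_iff_getElem] at h
  obtain ⟨k, hk, hkuv⟩ := h
  rw [List.length_zip, List.length_rotate, min_self] at hk
  rw [List.getElem_zip, List.getElem_rotate, Prod.mk.injEq] at hkuv
  obtain ⟨rfl, rfl⟩ := hkuv
  rw [Ne, C.nodup.getElem_inj_iff]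
  have := C.two_le
  intro hk'
  rcases Nat.lt_or_ge (k + 1) C.verts.length with hlt | hge
  · rw [Nat.mod_eq_of_lt hlt] at hk'
    omega
  · rw [show k + 1 = C.verts.length by omega, Nat.mod_self] at hk'
    omega

end Cyc

namespace DFSForest

variable {E : Finset (V × V)} (F : DFSForest V E) {a i j u v w x y : V}

theorem dfs_le_of_anc (h : Anc F.parent u v) : F.dfs u ≤ F.dfs v := by
  induction h with
  | refl => exact le_rfl
  | tail _ hp ih => exact (F.dfs_parent_lt _ _ hp).le.trans ih

theorem anc_antisymm (huv : Anc F.parent u v) (hvu : Anc F.parent v u) : u = v :=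
  F.dfs_inj ((F.dfs_le_of_anc huv).antisymm (F.dfs_le_of_anc hvu))

theorem dfs_lt_of_anc (h : Anc F.parent u v) (hne : u ≠ v) : F.dfs u < F.dfs v :=
  (F.dfs_le_of_anc h).lt_of_ne (F.dfs_inj.ne hne)

theorem parent_ne_of_parent_eq (h : F.parent u = some v) : F.parent v ≠ some u :=
  fun h' => (F.dfs_parent_lt _ _ h).not_gt (F.dfs_parent_lt _ _ h')

/-- One past the largest dfs number in the subtree of `v`. -/
def subtreeEnd (v : V) : ℕ := F.dfs v + (Finset.univ.filter fun u => Anc F.parent v u).card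

theorem dfs_mem_Ico_subtreeEnd_iff :
    F.dfs u ∈ Finset.Ico (F.dfs v) (F.subtreeEnd v) ↔ Anc F.parent v u := by
  rw [subtreeEnd, ← F.preorder v, Finset.mem_image]
  constructor
  · rintro ⟨u', hu', he⟩
    exact F.dfs_inj he ▸ (Finset.mem_filter.1 hu').2
  · exact fun h => ⟨u, Finset.mem_filter.2 ⟨Finset.mem_univ _, h⟩, rfl⟩

theorem dfs_lt_subtreeEnd (v : V) : F.dfs v < F.subtreeEnd v :=
  (Finset.mem_Ico.1 (F.dfs_mem_Ico_subtreeEnd_iff.2 (anc_refl v))).2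

theorem subtreeEnd_le_of_anc (h : Anc F.parent u v) : F.subtreeEnd v ≤ F.subtreeEnd u := by
  by_contra! hlt
  have hv : F.dfs v < F.subtreeEnd u := (Finset.mem_Ico.1 (F.dfs_mem_Ico_subtreeEnd_iff.2 h)).2
  obtain ⟨w, hw, hwu⟩ := Finset.mem_image.1 <|
    (F.preorder v).symm ▸ Finset.mem_Ico.2 ⟨hv.le, hlt⟩
  have hvw : Anc F.parent v w := (Finset.mem_filter.1 hw).2
  have := (Finset.mem_Ico.1 (F.dfs_mem_Ico_subtreeEnd_iff.2 (h.trans hvw))).2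
  omega

theorem subtreeEnd_le_dfs_of_not_anc (h : ¬ Anc F.parent v u) (hlt : F.dfs v < F.dfs u) :
    F.subtreeEnd v ≤ F.dfs u := by
  by_contra! h'
  exact h (F.dfs_mem_Ico_subtreeEnd_iff.1 (Finset.mem_Ico.2 ⟨hlt.le, h'⟩))

/-- `climb a w` lists `w, π w, π (π w), …`, stopping just before `a`. -/
def climb (a w : V) : List V :=
  if w = a then [] else
    match hp : F.parent w with
    | none => []
    | some p =>
      have := F.dfs_parent_lt w p hp
      w :: climb a p
termination_by F.dfs w

theorem climb_self : F.climb a a = [] := by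
  rw [climb, if_pos rfl]

theorem climb_of_parent_eq (hne : w ≠ a) (hp : F.parent w = some v) :
    F.climb a w = w :: F.climb a v := by
  rw [climb, if_neg hne]
  split <;> simp_all

theorem climb_of_parent_eq_none (hne : w ≠ a) (hp : F.parent w = none) : F.climb a w = [] := by
  rw [climb, if_neg hne]
  split <;> simp_all

theorem anc_of_mem_climb (h : u ∈ F.climb a w) : Anc F.parent u w := by
  induction w using climb.induct F a with
  | case1 => simp [climb_self] at h
  | case2 w hne hp => simp [F.climb_of_parent_eq_none hne hp] at h
  | case3 w hne p hp _ ih =>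
    rw [F.climb_of_parent_eq hne hp, List.mem_cons] at h
    rcases h with rfl | h
    · exact anc_refl u
    · exact (ih h).trans (anc_of_parent_eq hp)

theorem nodup_climb (a w : V) : (F.climb a w).Nodup := by
  induction w using climb.induct F a with
  | case1 => simp [climb_self]
  | case2 w hne hp => simp [F.climb_of_parent_eq_none hne hp]
  | case3 w hne p hp _ ih =>
    rw [F.climb_of_parent_eq hne hp, List.nodup_cons]
    refine ⟨fun hw => ?_, ih⟩
    have := F.dfs_le_of_anc (F.anc_of_mem_climb hw)
    have := F.dfs_parent_lt w p hp
    omega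

theorem mem_climb_iff (h : Anc F.parent a j) :
    u ∈ F.climb a j ↔ Anc F.parent a u ∧ Anc F.parent u j ∧ u ≠ a := by
  induction j using climb.induct F a with
  | case1 =>
    simp only [climb_self, List.not_mem_nil, false_iff, not_and]
    exact fun hau hua hne => hne (F.anc_antisymm hau hua).symm
  | case2 j hne hp =>
    obtain ⟨p, hp', -⟩ := h.exists_parent_eq (Ne.symm hne)
    simp_all
  | case3 j hne p hp _ ih =>
    rw [F.climb_of_parent_eq hne hp, List.mem_cons, ih (h.of_parent_eq (Ne.symm hne) hp)]
    constructor
    · rintro (rfl | ⟨hau, hup, hne'⟩)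
      · exact ⟨h, anc_refl u, hne⟩
      · exact ⟨hau, hup.trans (anc_of_parent_eq hp), hne'⟩
    · rintro ⟨hau, huj, hne'⟩
      by_cases huj' : u = j
      · exact Or.inl huj'
      · exact Or.inr ⟨hau, huj.of_parent_eq huj' hp, hne'⟩

theorem climb_append_eq_cons (h : Anc F.parent a j) : ∃ t, F.climb a j ++ [a] = j :: t := by
  induction j using climb.induct F a with
  | case1 => exact ⟨[], by rw [climb_self]; rfl⟩
  | case2 j hne hp =>
    obtain ⟨p, hp', -⟩ := h.exists_parent_eq (Ne.symm hne)
    simp_all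
  | case3 j hne p hp _ ih =>
    obtain ⟨t, ht⟩ := ih (h.of_parent_eq (Ne.symm hne) hp)
    exact ⟨p :: t, by rw [F.climb_of_parent_eq hne hp, List.cons_append, ht]⟩

def upPathArcs (a j : V) : Finset (V × V) :=
  Finset.univ.filter fun e =>
    F.parent e.1 = some e.2 ∧ Anc F.parent a e.1 ∧ Anc F.parent e.1 j ∧ e.1 ≠ a

theorem mem_upPathArcs {e : V × V} : e ∈ F.upPathArcs a j ↔
    F.parent e.1 = some e.2 ∧ Anc F.parent a e.1 ∧ Anc F.parent e.1 j ∧ e.1 ≠ a := by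
  simp [upPathArcs]

theorem pair_infix_climb_append_iff (h : Anc F.parent a j) :
    [u, v] <:+: F.climb a j ++ [a] ↔ (u, v) ∈ F.upPathArcs a j := by
  rw [mem_upPathArcs]
  induction j using climb.induct F a with
  | case1 =>
    rw [climb_self, List.nil_append]
    refine iff_of_false (fun h' => by simpa using h'.length_le) ?_
    exact fun ⟨_, hau, hua, hne⟩ => hne (F.anc_antisymm hua hau)
  | case2 j hne hp =>
    obtain ⟨p, hp', -⟩ := h.exists_parent_eq (Ne.symm hne)
    simp_all
  | case3 j hne p hp _ ih =>
    have hap := h.of_parent_eq (Ne.symm hne) hp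
    obtain ⟨t, ht⟩ := F.climb_append_eq_cons hap
    rw [F.climb_of_parent_eq hne hp, List.cons_append, List.infix_cons_iff, ih hap, ht]
    constructor
    · rintro (hpre | ⟨huv, hau, hup, hne'⟩)
      · obtain ⟨rfl, rfl⟩ : u = j ∧ v = p := by simpa using hpre
        exact ⟨hp, h, anc_refl u, hne⟩
      · exact ⟨huv, hau, hup.trans (anc_of_parent_eq hp), hne'⟩
    · rintro ⟨huv, hau, huj, hne'⟩
      by_cases huj' : u = j
      · subst huj'
        obtain rfl : v = p := Option.some.inj (huv.symm.trans hp)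
        exact Or.inl (by simp)
      · exact Or.inr ⟨huv, hau, huj.of_parent_eq huj' hp, hne'⟩

theorem mem_treePathArcs {e : V × V} : e ∈ F.treePathArcs a i ↔
    F.parent e.2 = some e.1 ∧ Anc F.parent a e.2 ∧ Anc F.parent e.2 i ∧ e.2 ≠ a := by
  simp [treePathArcs]

theorem upPathArcs_self (a : V) : F.upPathArcs a a = ∅ :=
  Finset.eq_empty_of_forall_notMem fun _ he =>
    let ⟨_, hau, hua, hne⟩ := F.mem_upPathArcs.1 he
    hne (F.anc_antisymm hua hau)

theorem treePathArcs_self (a : V) : F.treePathArcs a a = ∅ :=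
  Finset.eq_empty_of_forall_notMem fun _ he =>
    let ⟨_, hau, hua, hne⟩ := F.mem_treePathArcs.1 he
    hne (F.anc_antisymm hua hau)

theorem upPathArcs_subset_of_anc (hxa : Anc F.parent x a) :
    F.upPathArcs a y ⊆ F.upPathArcs x y := by
  intro e he
  obtain ⟨hp, hau, huy, hne⟩ := F.mem_upPathArcs.1 he
  refine F.mem_upPathArcs.2 ⟨hp, hxa.trans hau, huy, fun hx => hne ?_⟩
  exact F.anc_antisymm (hx ▸ hxa) hau

theorem upPathArcs_subset_insert (hp : F.parent y = some v) :
    F.upPathArcs x y ⊆ insert (y, v) (F.upPathArcs x v) := by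
  intro e he
  obtain ⟨hpe, hxe, hey, hne⟩ := F.mem_upPathArcs.1 he
  rw [Finset.mem_insert]
  by_cases h : e.1 = y
  · exact Or.inl (Prod.ext h (Option.some.inj (hpe.symm.trans (h ▸ hp))))
  · exact Or.inr (F.mem_upPathArcs.2 ⟨hpe, hxe, hey.of_parent_eq h hp, hne⟩)

theorem isLCA_of_anc_right (h : Anc F.parent i j) : F.IsLCA i i j :=
  ⟨anc_refl i, h, fun _ hb _ => hb⟩

theorem isLCA_of_anc_left (h : Anc F.parent j i) : F.IsLCA j i j :=
  ⟨h, anc_refl j, fun _ _ hb => hb⟩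

theorem exists_isLCA (hi : Anc F.parent x i) (hj : Anc F.parent x j) : ∃ a, F.IsLCA a i j := by
  let common := Finset.univ.filter fun b => Anc F.parent b i ∧ Anc F.parent b j
  have hx : x ∈ common := Finset.mem_filter.2 ⟨Finset.mem_univ _, hi, hj⟩
  obtain ⟨a, ha, hmax⟩ := common.exists_max_image F.dfs ⟨x, hx⟩
  obtain ⟨hai, haj⟩ := (Finset.mem_filter.1 ha).2
  refine ⟨a, hai, haj, fun b hbi hbj => ?_⟩
  rcases hbi.total hai with hba | hab
  · exact hba
  · have := hmax b (Finset.mem_filter.2 ⟨Finset.mem_univ _, hbi, hbj⟩)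
    exact F.dfs_inj (this.antisymm (F.dfs_le_of_anc hab)) ▸ anc_refl b

theorem pair_infix_reverse_climb_append_iff (h : Anc F.parent a i) {u v : V} :
    [u, v] <:+: (F.climb a i ++ [a]).reverse ↔ (u, v) ∈ F.treePathArcs a i := by
  rw [List.pair_infix_reverse_iff, F.pair_infix_climb_append_iff h, F.mem_upPathArcs,
    F.mem_treePathArcs]

theorem nodup_climb_append_cons_reverse_climb (hl : F.IsLCA a i j) :
    (F.climb a j ++ a :: (F.climb a i).reverse).Nodup := by
  obtain ⟨hai, haj, hlca⟩ := hl
  refine List.nodup_append.2 ⟨F.nodup_climb a j, ?_, ?_⟩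
  · refine List.nodup_cons.2 ⟨fun ha => ?_, List.nodup_reverse.2 (F.nodup_climb a i)⟩
    exact ((F.mem_climb_iff hai).1 (List.mem_reverse.1 ha)).2.2 rfl
  · rintro w hwj w' hw' rfl
    obtain ⟨haw, hwj, hwa⟩ := (F.mem_climb_iff haj).1 hwj
    rcases List.mem_cons.1 hw' with rfl | hwi
    · exact hwa rfl
    · have hwi := ((F.mem_climb_iff hai).1 (List.mem_reverse.1 hwi)).2.1
      exact hwa (F.anc_antisymm (hlca w hwi hwj) haw)

/-- The witness runs `j, π j, …, a` up the tree and then back down to `i`. -/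
theorem exists_cyc_arcs_eq (hl : F.IsLCA a i j) (hij : i ≠ j) :
    ∃ C : Cyc V, C.arcs = insert (i, j) (F.upPathArcs a j ∪ F.treePathArcs a i) := by
  have hnodup := F.nodup_climb_append_cons_reverse_climb hl
  obtain ⟨hai, haj, -⟩ := hl
  obtain ⟨tj, htj⟩ := F.climb_append_eq_cons haj
  obtain ⟨ti, hti⟩ := F.climb_append_eq_cons hai
  set L := F.climb a j ++ a :: (F.climb a i).reverse
  have hlen : 2 ≤ L.length := by
    have hlenL : L.length = (F.climb a j).length + 1 + (F.climb a i).length := by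
      simp [L]; omega
    by_contra! hlt
    rw [List.eq_nil_of_length_eq_zero (by omega : (F.climb a j).length = 0)] at htj
    rw [List.eq_nil_of_length_eq_zero (by omega : (F.climb a i).length = 0)] at hti
    simp only [List.nil_append, List.cons.injEq] at htj hti
    exact hij (hti.1.symm.trans htj.1)
  refine ⟨⟨L, hnodup, hlen⟩, ?_⟩
  ext ⟨u, v⟩
  have hrev : ti.reverse ++ [i] = (F.climb a i ++ [a]).reverse := by
    rw [hti, List.reverse_cons]
  have hL : L ++ L.take 1 = F.climb a j ++ a :: ((F.climb a i).reverse ++ [j]) := by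
    have hhead : L.take 1 = [j] := by
      rw [show L = (F.climb a j ++ [a]) ++ (F.climb a i).reverse by simp [L], htj]
      rfl
    simp [hhead, L]
  have hR : a :: ((F.climb a i).reverse ++ [j]) = ti.reverse ++ i :: [j] := by
    rw [← List.cons_append, ← List.reverse_concat', ← List.concat_eq_append, hti]
    simp
  rw [Cyc.mem_arcs_iff_infix]
  change [u, v] <:+: L ++ L.take 1 ↔ _
  rw [hL, List.pair_infix_append_cons_iff, hR, List.pair_infix_append_cons_iff (l₁ := ti.reverse),
    hrev, F.pair_infix_climb_append_iff haj, F.pair_infix_reverse_climb_append_iff hai,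
    List.pair_infix_pair_iff]
  simp only [Finset.mem_insert, Finset.mem_union, Prod.mk.injEq]
  tauto

theorem swap_notMem_of_isLCA (hl : F.IsLCA a i j) (hij : i ≠ j)
    (hji : F.parent j ≠ some i) (hij' : F.parent i ≠ some j) {e : V × V}
    (he : e ∈ insert (i, j) (F.upPathArcs a j ∪ F.treePathArcs a i)) :
    e.swap ∉ insert (i, j) (F.upPathArcs a j ∪ F.treePathArcs a i) := by
  obtain ⟨u, v⟩ := e
  have hmeet : ∀ w, Anc F.parent w i → Anc F.parent w j → Anc F.parent a w → w ≠ a → False :=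
    fun w hwi hwj haw hwa => hwa (F.anc_antisymm (hl.2.2 w hwi hwj) haw)
  simp only [Finset.mem_insert, Finset.mem_union, Prod.mk.injEq, Prod.swap_prod_mk,
    mem_upPathArcs, mem_treePathArcs] at he ⊢
  rcases he with ⟨rfl, rfl⟩ | ⟨huv, hau, huj, hua⟩ | ⟨hvu, hav, hvi, hva⟩ <;>
    rintro (⟨hvi', huj'⟩ | ⟨hvu', hav', hvj', hva'⟩ | ⟨huv', hau', hui', hua'⟩)
  · exact hij hvi'.symm
  · exact hji hvu'
  · exact hij' huv'
  · exact hji (hvi' ▸ huj' ▸ huv)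
  · exact F.parent_ne_of_parent_eq huv hvu'
  · exact hmeet u hui' huj hau hua
  · exact hij' (hvi' ▸ huj' ▸ hvu)
  · exact hmeet v hvi hvj' hav hva
  · exact F.parent_ne_of_parent_eq hvu huv'

theorem exists_proper_cyc_of_isLCA (hl : F.IsLCA a i j) (hij : i ≠ j)
    (hji : F.parent j ≠ some i) (hij' : F.parent i ≠ some j)
    (hE : (i, j) ∈ E) (hup : F.upPathArcs a j ⊆ E) :
    ∃ C : Cyc V, (∀ e ∈ C.arcs, e ∈ E) ∧ C.Proper ∧
      C.arcs = insert (i, j) (F.upPathArcs a j ∪ F.treePathArcs a i) := by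
  obtain ⟨C, hC⟩ := F.exists_cyc_arcs_eq hl hij
  refine ⟨C, fun e he => ?_, fun e he => ?_, hC⟩
  · rw [hC, Finset.mem_insert, Finset.mem_union] at he
    rcases he with rfl | he | he
    · exact hE
    · exact hup he
    · exact F.tree_arc_mem _ _ (F.mem_treePathArcs.1 he).1
  · rw [hC] at he ⊢
    exact F.swap_notMem_of_isLCA hl hij hji hij' he

theorem shortBackwardArc_of_mem_upPathArcs (hup : F.upPathArcs a j ⊆ E) {e : V × V}
    (he : e ∈ F.upPathArcs a j) : F.ShortBackwardArc e :=
  ⟨hup he, (F.mem_upPathArcs.1 he).1⟩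

theorem exists_properBackwardCycle (h : F.LongBackwardArc (i, j)) :
    ∃ C : Cyc V, (∀ e ∈ C.arcs, e ∈ E) ∧ F.ProperBackwardCycle C := by
  obtain ⟨⟨hE, hji, hne⟩, hlong⟩ := h
  have htree : F.parent j ≠ some i := fun hp => hne (F.anc_antisymm hji (anc_of_parent_eq hp))
  obtain ⟨C, hCE, hCp, hC⟩ := F.exists_proper_cyc_of_isLCA (F.isLCA_of_anc_left hji)
    (Ne.symm hne) htree hlong hE (by simp [upPathArcs_self])
  refine ⟨C, hCE, hCp, i, j, ⟨⟨hE, hji, hne⟩, hlong⟩, ?_⟩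
  rw [hC, upPathArcs_self, Finset.empty_union]

theorem exists_properForwardCycle (h : F.ForwardArc (i, j)) (hup : F.upPathArcs i j ⊆ E) :
    ∃ C : Cyc V, (∀ e ∈ C.arcs, e ∈ E) ∧ F.ProperForwardCycle C := by
  obtain ⟨hE, hntree, hij, hne⟩ := h
  have hback : F.parent i ≠ some j := fun hp => hne (F.anc_antisymm hij (anc_of_parent_eq hp))
  obtain ⟨C, hCE, hCp, hC⟩ := F.exists_proper_cyc_of_isLCA (F.isLCA_of_anc_right hij) hne
    (fun hp => hntree ⟨hE, hp⟩) hback hE hup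
  refine ⟨C, hCE, hCp, i, j, F.upPathArcs i j, ⟨hE, hntree, hij, hne⟩,
    fun e he => F.shortBackwardArc_of_mem_upPathArcs hup he, ?_⟩
  rw [hC, treePathArcs_self, Finset.union_empty]

theorem exists_properCrossCycle (h : F.CrossArc (i, j)) (hl : F.IsLCA a i j)
    (hup : F.upPathArcs a j ⊆ E) :
    ∃ C : Cyc V, (∀ e ∈ C.arcs, e ∈ E) ∧ F.ProperCrossCycle C := by
  obtain ⟨hE, hij, hji⟩ := h
  have hne : i ≠ j := fun h => hij (h ▸ anc_refl i)
  obtain ⟨C, hCE, hCp, hC⟩ := F.exists_proper_cyc_of_isLCA hl hne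
    (fun hp => hij (anc_of_parent_eq hp)) (fun hp => hji (anc_of_parent_eq hp)) hE hup
  exact ⟨C, hCE, hCp, i, j, a, F.upPathArcs a j, ⟨hE, hij, hji⟩, hl,
    fun e he => F.shortBackwardArc_of_mem_upPathArcs hup he, hC⟩

theorem exists_postorder_first {S : Finset V} (hS : S.Nonempty) :
    ∃ x ∈ S, (∀ x' ∈ S, Anc F.parent x x' → x' = x) ∧
      ∀ x' ∈ S, F.dfs x' < F.dfs x → Anc F.parent x' x := by
  -- postorder compares `subtreeEnd` first, then puts descendants before ancestors
  obtain ⟨x, hx, hmin⟩ :=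
    S.exists_min_image (fun v => toLex (F.subtreeEnd v, OrderDual.toDual (F.dfs v))) hS
  refine ⟨x, hx, fun x' hx' hxx' => ?_, fun x' hx' hlt => ?_⟩
  · by_contra hne
    have hlt := F.dfs_lt_of_anc hxx' (Ne.symm hne)
    have hend := F.subtreeEnd_le_of_anc hxx'
    have := hmin x' hx'
    simp only [Prod.Lex.toLex_le_toLex, OrderDual.toDual_le_toDual] at this
    omega
  · by_contra hanc
    have hend := F.subtreeEnd_le_dfs_of_not_anc hanc hlt
    have := F.dfs_lt_subtreeEnd x
    have := hmin x' hx'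
    simp only [Prod.Lex.toLex_le_toLex] at this
    omega

def nonShortTails (C : Cyc V) : Finset V :=
  (C.arcs.filter fun e => F.parent e.1 ≠ some e.2).image Prod.fst

theorem mem_nonShortTails {C : Cyc V} {x : V} :
    x ∈ F.nonShortTails C ↔ ∃ y, (x, y) ∈ C.arcs ∧ F.parent x ≠ some y := by
  simp [nonShortTails]

theorem nonShortTails_nonempty (C : Cyc V) : (F.nonShortTails C).Nonempty := by
  obtain ⟨m, hm, hmin⟩ := C.verts.toFinset.exists_min_image F.dfs
    ⟨_, List.mem_toFinset.2 (List.getElem_mem (n := 0) (by have := C.two_le; omega))⟩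
  obtain ⟨v, hv⟩ := C.exists_mem_arcs_of_mem (List.mem_toFinset.1 hm)
  refine ⟨m, F.mem_nonShortTails.2 ⟨v, hv, fun hp => ?_⟩⟩
  have := hmin v (List.mem_toFinset.2 (C.snd_mem_verts_of_mem_arcs hv))
  have := F.dfs_parent_lt m v hp
  omega

theorem exists_anc_upPathArcs_subset (C : Cyc V) {y : V} (hy : y ∈ C.verts) :
    ∃ x ∈ F.nonShortTails C, Anc F.parent x y ∧ F.upPathArcs x y ⊆ C.arcs := by
  induction y using (measure F.dfs).wf.induction with
  | h y ih =>
  obtain ⟨v, hv⟩ := C.exists_mem_arcs_of_mem hy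
  by_cases hp : F.parent y = some v
  · obtain ⟨x, hx, hxv, hsub⟩ :=
      ih v (F.dfs_parent_lt y v hp) (C.snd_mem_verts_of_mem_arcs hv)
    refine ⟨x, hx, hxv.trans (anc_of_parent_eq hp), ?_⟩
    exact (F.upPathArcs_subset_insert hp).trans (Finset.insert_subset hv hsub)
  · exact ⟨y, F.mem_nonShortTails.2 ⟨v, hv, hp⟩, anc_refl y, by simp [upPathArcs_self]⟩

end DFSForest

/-- If a directed graph equipped with a DFS forest contains a proper directed cycle, then
it contains a proper backward cycle, a proper forward cycle, or a proper cross cycle. -/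
theorem proper_cycle_classification (E : Finset (V × V)) (F : DFSForest V E)
    (h : ∃ C : Cyc V, (∀ a ∈ C.arcs, a ∈ E) ∧ C.Proper) :
    (∃ C : Cyc V, (∀ a ∈ C.arcs, a ∈ E) ∧ F.ProperBackwardCycle C) ∨
    (∃ C : Cyc V, (∀ a ∈ C.arcs, a ∈ E) ∧ F.ProperForwardCycle C) ∨
    (∃ C : Cyc V, (∀ a ∈ C.arcs, a ∈ E) ∧ F.ProperCrossCycle C) := by
  obtain ⟨C, hCE, hCp⟩ := h
  obtain ⟨x, hxS, hleaf, hleft⟩ := F.exists_postorder_first (F.nonShortTails_nonempty C)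
  obtain ⟨y, hxy, hnshort⟩ := F.mem_nonShortTails.1 hxS
  obtain ⟨x', hx'S, hx'y, hup⟩ :=
    F.exists_anc_upPathArcs_subset C (C.snd_mem_verts_of_mem_arcs hxy)
  have hE := hCE _ hxy
  have hne := C.ne_of_mem_arcs hxy
  have hupE (a : V) (hx'a : Anc F.parent x' a) : F.upPathArcs a y ⊆ E :=
    fun e he => hCE e (hup (F.upPathArcs_subset_of_anc hx'a he))
  by_cases hyx : Anc F.parent y x
  · exact Or.inl (F.exists_properBackwardCycle ⟨⟨hE, hyx, hne.symm⟩, hnshort⟩)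
  rcases F.arcs_comparable_or_lt _ hE with hfwd | hyx' | hlt
  · have hx'x : Anc F.parent x' x :=
      (hx'y.total hfwd).elim id fun h => by rw [hleaf x' hx'S h]; exact anc_refl x
    have htree : ¬ F.TreeArc (x, y) := fun ht => hCp _ hxy <|
      hup (F.upPathArcs_subset_of_anc hx'x (F.mem_upPathArcs.2 ⟨ht.2, hfwd, anc_refl y, hne.symm⟩))
    exact Or.inr (Or.inl (F.exists_properForwardCycle ⟨hE, htree, hfwd, hne⟩ (hupE x hx'x)))
  · exact absurd hyx' hyx
  · have hxy' : ¬ Anc F.parent x y := fun h => (F.dfs_le_of_anc h).not_gt hlt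
    have hx'x : Anc F.parent x' x := hleft x' hx'S ((F.dfs_le_of_anc hx'y).trans_lt hlt)
    obtain ⟨a, hl⟩ := F.exists_isLCA hx'x hx'y
    exact Or.inr (Or.inr
      (F.exists_properCrossCycle ⟨hE, hxy', hyx⟩ hl (hupE a (hl.2.2 x' hx'x hx'y))))
end
end

section
/- Let f be an optimal integer flow with an optimal node potential y such that the residual reduced costs satisfy c̄(f) ≥ 0 on D_f, and let (i,j) be an arc of D_f whose reverse (j,i) is not in A_f. Then the minimum of c(f,C) over all proper directed cycles C in D_f containing (i,j) equals c̄_{ij}(f) + d̄_{ji}, where d̄_{ji} is the shortest-path distance from j to i in D_f with respect to the residual reduced costs c̄(f). -/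
open scoped Classical
noncomputable section

variable {V : Type} [Fintype V] [DecidableEq V]

namespace Network

/-- `p` is a (simple) directed path from `j` to `i` in the residual graph `D_f`. -/
def IsResPath (N : Network V) (f : V × V → ℤ) (j i : V) (p : List V) : Prop :=
  p.Nodup ∧ p.head? = some j ∧ p.getLast? = some i ∧
    p.Chain' fun u v => (u, v) ∈ N.resArcs f

/-- The total residual reduced cost of a path (a list of vertices). -/
def pathRedCost (N : Network V) (y : V → ℝ) (p : List V) : ℝ :=
  ((p.zip p.tail).map fun a => N.resRedCost y a).sum

end Network

/-! Potentials telescope around a cycle, so `c(f,C)` equals the reduced cost of `C`. Rotating a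
cycle through `(i,j)` so that it starts at `j` exhibits it as a path from `j` to `i` closed by
`(i,j)`. Conversely, closing such a path by `(i,j)` gives a cycle; it has at least three
vertices because `(j,i)` is not residual, and a simple cycle on at least three vertices is
proper. -/

namespace List

variable {α : Type*}

theorem isChain_iff_forall_mem_zip_tail {R : α → α → Prop} {l : List α} :
    l.IsChain R ↔ ∀ a ∈ l.zip l.tail, R a.1 a.2 := by
  induction l using twoStepInduction with
  | nil | singleton => simp
  | cons_cons a b t _ ih => simp [isChain_cons_cons, ih]

theorem sum_map_sub_zip_tail {M : Type*} [AddCommGroup M] (y : α → M) :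
    ∀ {l : List α} {i j : α}, l.head? = some j → l.getLast? = some i →
      ((l.zip l.tail).map fun a => y a.1 - y a.2).sum = y j - y i
  | [_], _, _, hj, hi => by simp_all
  | _ :: b :: t, _, _, hj, hi => by
    have ih := sum_map_sub_zip_tail y (l := b :: t) rfl (by simpa using hi)
    simp_all

theorem zip_cons_append_singleton {i k : α} :
    ∀ {j : α} {t : List α}, (j :: t).getLast? = some i →
      (j :: t).zip (t ++ [k]) = (j :: t).zip t ++ [(i, k)]
  | _, [], hi => by simp_all
  | _, b :: t, hi => by
    rw [cons_append, zip_cons_cons, zip_cons_cons, cons_append,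
      zip_cons_append_singleton (by simpa using hi)]

theorem zip_rotate_one_eq_append {l : List α} {i j : α} (hj : l.head? = some j)
    (hi : l.getLast? = some i) : l.zip (l.rotate 1) = l.zip l.tail ++ [(i, j)] := by
  obtain ⟨t, rfl⟩ : ∃ t, l = j :: t := by
    cases l <;> simp_all
  simpa using zip_cons_append_singleton hi

theorem sum_map_sub_zip_rotate_one {M : Type*} [AddCommGroup M] (y : α → M) (l : List α) :
    ((l.zip (l.rotate 1)).map fun a => y a.1 - y a.2).sum = 0 := by
  cases l with
  | nil => simp
  | cons j t =>
    have hi := getLast?_eq_some_getLast (cons_ne_nil j t)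
    rw [zip_rotate_one_eq_append rfl hi, map_append, sum_append, sum_map_sub_zip_tail y rfl hi]
    simp

theorem nodup_zip_rotate_one {l : List α} (hl : l.Nodup) : (l.zip (l.rotate 1)).Nodup :=
  .of_map Prod.fst <| by rwa [map_fst_zip (by simp)]

theorem zip_rotate_one_rotate (l : List α) (n : ℕ) :
    (l.rotate n).zip ((l.rotate n).rotate 1) = (l.zip (l.rotate 1)).rotate n := by
  rw [zip, zipWith_rotate_distrib _ _ _ _ (length_rotate ..).symm, rotate_rotate,
    rotate_rotate, Nat.add_comm]

theorem mem_zip_rotate_one {l : List α} {a : α × α} :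
    a ∈ l.zip (l.rotate 1) ↔ ∃ (k : ℕ) (hk : k < l.length),
      a = (l[k], l[(k + 1) % l.length]'(Nat.mod_lt _ (by omega))) := by
  simp only [mem_iff_getElem, length_zip, length_rotate, min_self, getElem_zip, getElem_rotate]
  exact exists_congr fun k => ⟨fun ⟨hk, h⟩ => ⟨hk, h.symm⟩, fun ⟨hk, h⟩ => ⟨hk, h.symm⟩⟩

theorem exists_rotate_head?_getLast? {l : List α} {a b : α} (h : (a, b) ∈ l.zip (l.rotate 1)) :
    ∃ n, (l.rotate n).head? = some b ∧ (l.rotate n).getLast? = some a := by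
  obtain ⟨k, hk, hab⟩ := mem_zip_rotate_one.mp h
  simp only [Prod.mk.injEq] at hab
  have hlast : (l.length - 1 + (k + 1)) % l.length = k := by
    rw [show l.length - 1 + (k + 1) = k + l.length by omega, Nat.add_mod_right,
      Nat.mod_eq_of_lt hk]
  refine ⟨k + 1, ?_, ?_⟩
  · rw [head?_eq_getElem?, getElem?_rotate (by omega), hab.2,
      getElem?_eq_getElem (Nat.mod_lt _ (by omega))]
    simp
  · rw [getLast?_eq_getElem?, getElem?_rotate (by simp; omega), hab.1, length_rotate]
    simp [hlast]

theorem swap_not_mem_zip_rotate_one {l : List α} (hl : l.Nodup) (h3 : 3 ≤ l.length)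
    {a : α × α} (ha : a ∈ l.zip (l.rotate 1)) : (a.2, a.1) ∉ l.zip (l.rotate 1) := by
  intro hb
  obtain ⟨k, hk, rfl⟩ := mem_zip_rotate_one.mp ha
  obtain ⟨m, hm, hkm⟩ := mem_zip_rotate_one.mp hb
  simp only [Prod.mk.injEq, hl.getElem_inj_iff] at hkm
  obtain ⟨rfl, hk2⟩ := hkm
  rw [Nat.mod_add_mod] at hk2
  rcases Nat.lt_or_ge (k + 1 + 1) l.length with hlt | hge
  · rw [Nat.mod_eq_of_lt hlt] at hk2; omega
  · rw [Nat.mod_eq_sub_mod hge, Nat.mod_eq_of_lt (by omega)] at hk2; omega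

end List

namespace Cyc

variable {W : Type} [DecidableEq W]

def rotate (C : Cyc W) (n : ℕ) : Cyc W :=
  ⟨C.verts.rotate n, List.nodup_rotate.mpr C.nodup, by simpa using C.two_le⟩

theorem arcs_rotate (C : Cyc W) (n : ℕ) : (C.rotate n).arcs = C.arcs := by
  ext a
  rw [arcs, arcs, rotate, List.mem_toFinset, List.mem_toFinset, List.zip_rotate_one_rotate,
    List.mem_rotate]

theorem exists_rotate_head?_getLast? {C : Cyc W} {e : W × W} (he : e ∈ C.arcs) :
    ∃ n, (C.rotate n).verts.head? = some e.2 ∧ (C.rotate n).verts.getLast? = some e.1 :=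
  List.exists_rotate_head?_getLast? (List.mem_toFinset.mp he)

theorem mem_arcs_iff {C : Cyc W} {i j : W} (hj : C.verts.head? = some j)
    (hi : C.verts.getLast? = some i) {a : W × W} :
    a ∈ C.arcs ↔ a ∈ C.verts.zip C.verts.tail ∨ a = (i, j) := by
  simp [arcs, List.zip_rotate_one_eq_append hj hi, or_comm]

theorem proper_of_three_le (C : Cyc W) (h : 3 ≤ C.verts.length) : C.Proper := fun _ ha =>
  by simpa [arcs] using List.swap_not_mem_zip_rotate_one C.nodup h (List.mem_toFinset.mp ha)

end Cyc

namespace Network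

variable (N : Network V) (y : V → ℝ)

theorem cycCost_eq_sum_resRedCost (C : Cyc V) :
    N.cycCost C = ((C.verts.zip (C.verts.rotate 1)).map (N.resRedCost y)).sum := by
  have hsplit : N.resRedCost y = fun a => N.resCost a + (y a.1 - y a.2) :=
    funext fun _ => add_sub_assoc ..
  rw [hsplit, List.sum_map_add, List.sum_map_sub_zip_rotate_one, add_zero, cycCost, Cyc.arcs,
    List.sum_toFinset _ (List.nodup_zip_rotate_one C.nodup)]

theorem cycCost_eq_pathRedCost_add {C : Cyc V} {i j : V} (hj : C.verts.head? = some j)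
    (hi : C.verts.getLast? = some i) :
    N.cycCost C = N.pathRedCost y C.verts + N.resRedCost y (i, j) := by
  rw [N.cycCost_eq_sum_resRedCost y, List.zip_rotate_one_eq_append hj hi, List.map_append,
    List.sum_append, pathRedCost]
  simp

variable {N} {f : V × V → ℤ} {e : V × V}

theorem IsResPath.three_le_length {i j : V} {p : List V} (he : (i, j) ∈ N.resArcs f)
    (hrev : (j, i) ∉ N.resArcs f) (hp : N.IsResPath f j i p) : 3 ≤ p.length := by
  obtain ⟨-, hj, hi, hchain⟩ := hp
  rcases p with _ | ⟨_, _ | ⟨_, _ | ⟨_, _⟩⟩⟩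
  · simp at hj
  · simp_all
  · simp only [List.head?_cons, List.getLast?_cons_cons, List.getLast?_singleton,
      Option.some.injEq] at hj hi
    subst hj hi
    exact absurd (List.isChain_pair.mp hchain) hrev
  · simp

theorem exists_proper_cycle_of_isResPath (he : e ∈ N.resArcs f)
    (hrev : (e.2, e.1) ∉ N.resArcs f) {p : List V} (hp : N.IsResPath f e.2 e.1 p) :
    ∃ C : Cyc V, N.IsResCycle f C ∧ C.Proper ∧ e ∈ C.arcs ∧
      N.cycCost C = N.resRedCost y e + N.pathRedCost y p := by
  have h3 := hp.three_le_length he hrev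
  obtain ⟨hnodup, hj, hi, hchain⟩ := hp
  let C : Cyc V := ⟨p, hnodup, by omega⟩
  have hmem : ∀ a, a ∈ C.arcs ↔ a ∈ p.zip p.tail ∨ a = e := fun a => Cyc.mem_arcs_iff hj hi
  refine ⟨C, fun a ha => ?_, C.proper_of_three_le h3, (hmem e).mpr (.inr rfl), ?_⟩
  · rcases (hmem a).mp ha with ha | rfl
    exacts [List.isChain_iff_forall_mem_zip_tail.mp hchain a ha, he]
  · rw [N.cycCost_eq_pathRedCost_add y hj hi, add_comm]

theorem exists_isResPath_of_isResCycle {C : Cyc V} (hC : N.IsResCycle f C) (he : e ∈ C.arcs) :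
    ∃ p, N.IsResPath f e.2 e.1 p ∧ N.cycCost C = N.resRedCost y e + N.pathRedCost y p := by
  obtain ⟨n, hj, hi⟩ := Cyc.exists_rotate_head?_getLast? he
  have hchain : (C.rotate n).verts.IsChain fun u v => (u, v) ∈ N.resArcs f :=
    List.isChain_iff_forall_mem_zip_tail.mpr fun a ha =>
      hC a (C.arcs_rotate n ▸ (Cyc.mem_arcs_iff hj hi).mpr (.inl ha))
  refine ⟨_, ⟨(C.rotate n).nodup, hj, hi, hchain⟩, ?_⟩
  have hcost : N.cycCost (C.rotate n) = N.cycCost C := by rw [cycCost, cycCost, Cyc.arcs_rotate]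
  rw [← hcost, N.cycCost_eq_pathRedCost_add y hj hi, add_comm]

end Network

theorem min_proper_cycle_through_arc_general (N : Network V)
    (f : V × V → ℤ) (y : V → ℝ)
    (e : V × V) (he : e ∈ N.resArcs f) (hrev : (e.2, e.1) ∉ N.resArcs f)
    (d : ℝ)
    (hd : IsLeast {x : ℝ | ∃ p : List V, N.IsResPath f e.2 e.1 p ∧ x = N.pathRedCost y p} d) :
    IsLeast {x : ℝ | ∃ C : Cyc V,
        N.IsResCycle f C ∧ C.Proper ∧ e ∈ C.arcs ∧ x = N.cycCost C}
      (N.resRedCost y e + d) := by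
  refine ⟨?_, ?_⟩
  · obtain ⟨p, hp, rfl⟩ := hd.1
    obtain ⟨C, hC, hproper, heC, hcost⟩ := N.exists_proper_cycle_of_isResPath y he hrev hp
    exact ⟨C, hC, hproper, heC, hcost.symm⟩
  · rintro _ ⟨C, hC, -, heC, rfl⟩
    obtain ⟨p, hp, hcost⟩ := N.exists_isResPath_of_isResCycle y hC heC
    rw [hcost]
    gcongr
    exact hd.2 ⟨p, hp, rfl⟩

/-- Let `f` be an optimal flow with an optimal node potential `y` and let `(i,j)` be a
residual arc whose reverse is not a residual arc. Then the minimum of `c(f,C)` over all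
proper directed cycles `C` of `D_f` containing `(i,j)` equals `c̄_{ij}(f) + d̄_{ji}`,
where `d̄_{ji}` is the shortest-path distance from `j` to `i` in `D_f` with respect to the
residual reduced costs. -/
theorem min_proper_cycle_through_arc (N : Network V) (hN : N.Wellformed)
    (f : V × V → ℤ) (hf : N.Optimal f) (y : V → ℝ) (hy : N.OptPotential f y)
    (e : V × V) (he : e ∈ N.resArcs f) (hrev : (e.2, e.1) ∉ N.resArcs f)
    (d : ℝ)
    (hd : IsLeast {x : ℝ | ∃ p : List V, N.IsResPath f e.2 e.1 p ∧ x = N.pathRedCost y p} d) :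
    IsLeast {x : ℝ | ∃ C : Cyc V,
        N.IsResCycle f C ∧ C.Proper ∧ e ∈ C.arcs ∧ x = N.cycCost C}
      (N.resRedCost y e + d) :=
  min_proper_cycle_through_arc_general N f y e he hrev d hd
end
end

section
/- Let D be a finite directed graph and T a spanning tree of its underlying undirected graph. For each non-tree arc a = (i,j), let C_a denote the edge set of the unique cycle formed by a together with the tree path from j to i. Then every cycle C_D of the underlying undirected graph of D (viewed as an edge set) equals the iterated symmetric difference of the edge sets C_a over all non-tree arcs a ∈ C_D ∖ T. -/
/-!
Count vertex degrees modulo 2. Every cycle of the underlying undirected graph has even degree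
at every vertex, and degrees are additive under symmetric difference. Each `C_a` meets the
non-tree arcs only in `a`, so `C_D ∘ (∘_{a ∈ C_D ∖ T} C_a)` consists of tree arcs and has even
degree everywhere. Such a set is empty: if `e` is one of its arcs, `e` is the only tree arc
crossing the fundamental cut of `e`, so the degrees on one side of that cut add up to 1.
-/

open scoped Classical
noncomputable section

variable {V : Type} [Fintype V] [DecidableEq V]

/-- The consecutive (cyclic) pairs of a list of vertices. -/
def cyclePairs (vs : List V) : List (V × V) := vs.zip (vs.rotate 1)

/-- `C` is the edge set of a cycle of the underlying undirected graph of the digraph with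
arc set `A`: the arcs of `A` whose underlying edges are the consecutive (cyclic) pairs of
a duplicate-free list of at least three vertices. -/
def IsUCycle (A C : Finset (V × V)) : Prop :=
  ∃ vs : List V, vs.Nodup ∧ 3 ≤ vs.length ∧
    (∀ p ∈ cyclePairs vs, p ∈ A ∨ p.swap ∈ A) ∧
    C = A.filter fun a => a ∈ cyclePairs vs ∨ a.swap ∈ cyclePairs vs

/-- `T ⊆ A` is a spanning tree of the underlying undirected graph: it connects all
vertices and has `|V| - 1` edges. -/
def IsSpanningTree (A T : Finset (V × V)) : Prop :=
  T ⊆ A ∧ (∀ u v : V, Relation.ReflTransGen (fun x y => (x, y) ∈ T ∨ (y, x) ∈ T) u v) ∧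
    T.card + 1 = Fintype.card V

/-- `C` is the unique (fundamental) cycle induced by the non-tree arc `a`: the cycle
consisting of `a` together with tree edges only. -/
def IsFundCycle (A T : Finset (V × V)) (a : V × V) (C : Finset (V × V)) : Prop :=
  IsUCycle A C ∧ a ∈ C ∧ C \ {a} ⊆ T

instance symmDiffComm : Std.Commutative fun s t : Finset (V × V) => symmDiff s t :=
  ⟨fun _ _ => symmDiff_comm _ _⟩

instance symmDiffAssoc : Std.Associative fun s t : Finset (V × V) => symmDiff s t :=
  ⟨fun _ _ _ => symmDiff_assoc _ _ _⟩

/-- The iterated symmetric difference (composition `∘` of the paper) of the edge sets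
`Ca a` over `a ∈ S`. -/
def foldSymmDiff (S : Finset (V × V)) (Ca : V × V → Finset (V × V)) : Finset (V × V) :=
  S.fold (fun s t => symmDiff s t) ∅ Ca

section
omit [Fintype V]

def endpointCount (v : V) (a : V × V) : ZMod 2 :=
  (if a.1 = v then 1 else 0) + (if a.2 = v then 1 else 0)

def parityDeg (S : Finset (V × V)) (v : V) : ZMod 2 := ∑ a ∈ S, endpointCount v a

lemma endpointCount_swap (v : V) (a : V × V) : endpointCount v a.swap = endpointCount v a :=
  add_comm _ _

lemma sum_symmDiff_of_charP_two {α R : Type*} [DecidableEq α] [CommSemiring R] [CharP R 2]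
    (s t : Finset α) (f : α → R) : ∑ x ∈ symmDiff s t, f x = ∑ x ∈ s, f x + ∑ x ∈ t, f x := by
  rw [← Finset.sum_union_inter, symmDiff_eq_sup_sdiff_inf,
    ← Finset.sum_sdiff (Finset.inter_subset_union (s := s) (t := t)), add_assoc,
    CharTwo.add_self_eq_zero, add_zero]
  rfl

lemma parityDeg_symmDiff (S S' : Finset (V × V)) (v : V) :
    parityDeg (symmDiff S S') v = parityDeg S v + parityDeg S' v :=
  sum_symmDiff_of_charP_two S S' _

lemma sum_parityDeg (S : Finset (V × V)) (U : Finset V) :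
    ∑ v ∈ U, parityDeg S v =
      ∑ a ∈ S, ((if a.1 ∈ U then 1 else 0) + (if a.2 ∈ U then 1 else 0)) := by
  simp only [parityDeg, endpointCount]
  rw [Finset.sum_comm]
  refine Finset.sum_congr rfl fun a _ => ?_
  rw [Finset.sum_add_distrib, Finset.sum_ite_eq, Finset.sum_ite_eq]

omit [DecidableEq V] in
lemma mem_cyclePairs {vs : List V} {p : V × V} :
    p ∈ cyclePairs vs ↔ ∃ k, ∃ hk : k < vs.length,
      p = (vs[k], vs[(k + 1) % vs.length]'(Nat.mod_lt _ (by omega))) := by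
  simp [cyclePairs, List.mem_iff_getElem, List.getElem_rotate, eq_comm]

omit [DecidableEq V] in
lemma nodup_cyclePairs {vs : List V} (hvs : vs.Nodup) : (cyclePairs vs).Nodup := by
  refine List.Nodup.of_map Prod.fst ?_
  rwa [cyclePairs, List.map_fst_zip (by simp)]

omit [DecidableEq V] in
lemma swap_notMem_cyclePairs {vs : List V} (hvs : vs.Nodup) (hlen : 3 ≤ vs.length) {p : V × V}
    (hp : p ∈ cyclePairs vs) : p.swap ∉ cyclePairs vs := by
  intro hq
  obtain ⟨k, hk, rfl⟩ := mem_cyclePairs.1 hp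
  obtain ⟨m, hm, hkm⟩ := mem_cyclePairs.1 hq
  simp only [Prod.swap_prod_mk, Prod.mk.injEq, hvs.getElem_inj_iff] at hkm
  obtain ⟨hkm, hmk⟩ := hkm
  -- `m = k + 1` and `k = m + 1` modulo a length of at least 3
  rw [Nat.add_mod_eq_ite, Nat.mod_eq_of_lt hk, Nat.one_mod_eq_one.2 (by omega)] at hkm
  rw [Nat.add_mod_eq_ite, Nat.mod_eq_of_lt hm, Nat.one_mod_eq_one.2 (by omega)] at hmk
  split_ifs at hkm hmk <;> omega

lemma sum_endpointCount_cyclePairs (vs : List V) (v : V) :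
    ((cyclePairs vs).map (endpointCount v)).sum = 0 := by
  set f : V → ZMod 2 := fun x => if x = v then 1 else 0
  have hlen : vs.length = (vs.rotate 1).length := by simp
  calc ((cyclePairs vs).map (endpointCount v)).sum
      = (((cyclePairs vs).map Prod.fst).map f).sum
          + (((cyclePairs vs).map Prod.snd).map f).sum := by
        simp only [List.map_map]
        exact List.sum_map_add
    _ = (vs.map f).sum + ((vs.rotate 1).map f).sum := by
        rw [cyclePairs, List.map_fst_zip hlen.le, List.map_snd_zip hlen.ge]
    _ = 0 := by
        rw [((List.rotate_perm vs 1).map f).sum_eq, CharTwo.add_self_eq_zero]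

lemma parityDeg_filter_eq_sum {A P : Finset (V × V)} (hA : ∀ a ∈ A, (a.2, a.1) ∉ A)
    (hP : ∀ p ∈ P, p.swap ∉ P) (hPA : ∀ p ∈ P, p ∈ A ∨ p.swap ∈ A) (v : V) :
    parityDeg (A.filter fun a => a ∈ P ∨ a.swap ∈ P) v = ∑ p ∈ P, endpointCount v p := by
  refine Finset.sum_nbij' (fun a => if a ∈ P then a else a.swap)
    (fun p => if p ∈ A then p else p.swap) ?_ ?_ ?_ ?_ ?_
  · intro a ha
    simp only [Finset.mem_filter] at ha
    split_ifs <;> tauto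
  · intro p hp
    have := hPA p hp
    simp only [Finset.mem_filter]
    split_ifs <;> simp_all
  · intro a ha
    simp only [Finset.mem_filter] at ha
    have := hA a ha.1
    split_ifs <;> simp_all
  · intro p hp
    have := hP p hp
    split_ifs <;> simp_all
  · intro a _
    split_ifs <;> simp [endpointCount_swap]

lemma parityDeg_eq_zero_of_isUCycle {A C : Finset (V × V)} (hA : ∀ a ∈ A, (a.2, a.1) ∉ A)
    (hC : IsUCycle A C) (v : V) : parityDeg C v = 0 := by
  obtain ⟨vs, hvs, hlen, hvsA, rfl⟩ := hC
  have h := parityDeg_filter_eq_sum (P := (cyclePairs vs).toFinset) hA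
    (by simpa using fun p => swap_notMem_cyclePairs hvs hlen (p := p)) (by simpa using hvsA) v
  simp only [List.mem_toFinset] at h
  rw [h, List.sum_toFinset _ (nodup_cyclePairs hvs), sum_endpointCount_cyclePairs]

def arcGraph (E : Finset (V × V)) : SimpleGraph V :=
  SimpleGraph.fromEdgeSet (E.image fun a => s(a.1, a.2))

variable {E : Finset (V × V)}

omit [DecidableEq V] in
lemma fst_ne_snd_of_mem (hE : ∀ a ∈ E, (a.2, a.1) ∉ E) {a : V × V} (ha : a ∈ E) : a.1 ≠ a.2 :=
  fun h => hE a ha (by rwa [show (a.2, a.1) = a from Prod.ext h.symm h])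

omit [DecidableEq V] in
lemma injOn_sym2Mk (hE : ∀ a ∈ E, (a.2, a.1) ∉ E) :
    Set.InjOn (fun a : V × V => s(a.1, a.2)) E := by
  rintro ⟨x, y⟩ hxy ⟨z, w⟩ hzw h
  rcases Sym2.eq_iff.1 h with ⟨rfl, rfl⟩ | ⟨rfl, rfl⟩
  · rfl
  · exact absurd hzw (hE _ hxy)

lemma arcGraph_adj_of_mem (hE : ∀ a ∈ E, (a.2, a.1) ∉ E) {a : V × V} (ha : a ∈ E) :
    (arcGraph E).Adj a.1 a.2 :=
  (SimpleGraph.fromEdgeSet_adj _).2 ⟨Finset.mem_image_of_mem _ ha, fst_ne_snd_of_mem hE ha⟩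

lemma card_edgeSet_arcGraph (hE : ∀ a ∈ E, (a.2, a.1) ∉ E) :
    Nat.card (arcGraph E).edgeSet = E.card := by
  have hloopless : (E.image fun a => s(a.1, a.2) : Set (Sym2 V)) \ Sym2.diagSet =
      E.image fun a => s(a.1, a.2) := by
    refine sdiff_eq_left.2 (Set.disjoint_left.2 ?_)
    simp only [Finset.coe_image, Set.mem_image, Finset.mem_coe]
    rintro _ ⟨a, ha, rfl⟩
    exact fst_ne_snd_of_mem hE ha
  rw [arcGraph, SimpleGraph.edgeSet_fromEdgeSet, hloopless, Nat.card_coe_set_eq,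
    Set.ncard_coe_finset, Finset.card_image_of_injOn (injOn_sym2Mk hE)]

end

lemma parityDeg_foldSymmDiff {S : Finset (V × V)} {Ca : V × V → Finset (V × V)}
    (hCa : ∀ a ∈ S, ∀ v, parityDeg (Ca a) v = 0) (v : V) :
    parityDeg (foldSymmDiff S Ca) v = 0 := by
  induction S using Finset.induction_on with
  | empty => simp [foldSymmDiff, parityDeg]
  | @insert a S ha ih =>
    rw [foldSymmDiff, Finset.fold_insert ha, ← foldSymmDiff, parityDeg_symmDiff,
      hCa a (Finset.mem_insert_self a S), ih fun b hb => hCa b (Finset.mem_insert_of_mem hb),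
      add_zero]

lemma mem_foldSymmDiff_iff {S : Finset (V × V)} {Ca : V × V → Finset (V × V)} {b : V × V}
    (hb : ∀ a ∈ S, b ∈ Ca a ↔ a = b) : b ∈ foldSymmDiff S Ca ↔ b ∈ S := by
  induction S using Finset.induction_on with
  | empty => simp [foldSymmDiff]
  | @insert a S ha ih =>
    rw [foldSymmDiff, Finset.fold_insert ha, ← foldSymmDiff, Finset.mem_symmDiff,
      ih fun c hc => hb c (Finset.mem_insert_of_mem hc), hb a (Finset.mem_insert_self a S),
      Finset.mem_insert]
    grind

omit [Fintype V] in
lemma IsFundCycle.mem_iff_eq_of_notMem {A T C : Finset (V × V)} {a b : V × V}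
    (hC : IsFundCycle A T a C) (hb : b ∉ T) : b ∈ C ↔ a = b := by
  refine ⟨fun hbC => by_contra fun hab => hb (hC.2.2 ?_), fun hab => hab ▸ hC.2.1⟩
  exact Finset.mem_sdiff.2 ⟨hbC, Finset.notMem_singleton.2 (Ne.symm hab)⟩

lemma isTree_arcGraph {A T : Finset (V × V)} (hT : IsSpanningTree A T)
    (hTT : ∀ a ∈ T, (a.2, a.1) ∉ T) : (arcGraph T).IsTree := by
  obtain ⟨-, hconn, hcard⟩ := hT
  refine SimpleGraph.isTree_iff_connected_and_card.2 ⟨?_, ?_⟩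
  · have : Nonempty V := Fintype.card_pos_iff.1 (by omega)
    refine (SimpleGraph.connected_iff _).2 ⟨fun u v => ?_, this⟩
    refine (SimpleGraph.reachable_iff_reflTransGen u v).2
      (Relation.ReflTransGen.lift' id ?_ u v (hconn u v))
    rintro x y (h | h)
    · exact .single (arcGraph_adj_of_mem hTT h)
    · exact .single (arcGraph_adj_of_mem hTT h).symm
  · rw [card_edgeSet_arcGraph hTT, hcard, Nat.card_eq_fintype_card]

lemma exists_cut_of_mem_spanningTree {A T : Finset (V × V)} (hT : IsSpanningTree A T)
    (hTT : ∀ a ∈ T, (a.2, a.1) ∉ T) {e : V × V} (he : e ∈ T) :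
    ∃ U : Finset V, e.1 ∈ U ∧ e.2 ∉ U ∧ ∀ a ∈ T, a ≠ e → (a.1 ∈ U ↔ a.2 ∈ U) := by
  set H := (arcGraph T).deleteEdges {s(e.1, e.2)}
  have hbridge : ¬ H.Reachable e.1 e.2 :=
    SimpleGraph.isAcyclic_iff_forall_adj_isBridge.1 (isTree_arcGraph hT hTT).isAcyclic
      (arcGraph_adj_of_mem hTT he)
  have hadj : ∀ a ∈ T, a ≠ e → H.Adj a.1 a.2 := fun a ha hae =>
    SimpleGraph.deleteEdges_adj.2 ⟨arcGraph_adj_of_mem hTT ha,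
      fun h => hae (injOn_sym2Mk hTT ha he (Set.mem_singleton_iff.1 h))⟩
  refine ⟨Finset.univ.filter (H.Reachable e.1), by simp, by simpa using hbridge,
    fun a ha hae => ?_⟩
  simp only [Finset.mem_filter, Finset.mem_univ, true_and]
  exact ⟨fun h => h.trans (hadj a ha hae).reachable,
    fun h => h.trans (hadj a ha hae).symm.reachable⟩

lemma eq_empty_of_subset_spanningTree {A T S : Finset (V × V)} (hT : IsSpanningTree A T)
    (hTT : ∀ a ∈ T, (a.2, a.1) ∉ T) (hST : S ⊆ T) (hS : ∀ v, parityDeg S v = 0) : S = ∅ := by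
  by_contra hne
  obtain ⟨e, he⟩ := Finset.nonempty_of_ne_empty hne
  obtain ⟨U, he₁, he₂, hcut⟩ := exists_cut_of_mem_spanningTree hT hTT (hST he)
  have hone := sum_parityDeg S U
  rw [Finset.sum_eq_zero fun v _ => hS v, Finset.sum_eq_single e] at hone
  · simp [he₁, he₂] at hone
  · intro a ha hae
    simp only [hcut a (hST ha) hae]
    split_ifs <;> simp [CharTwo.add_self_eq_zero]
  · exact fun h => absurd he h

/-- Every cycle `C_D` of the underlying undirected graph of `D` equals the iterated
symmetric difference of the fundamental cycles `C_a` over the non-tree arcs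
`a ∈ C_D ∖ T`. -/
theorem cycle_eq_symmDiff_of_fundamental_cycles (A T : Finset (V × V))
    (hA : ∀ a ∈ A, (a.2, a.1) ∉ A) (hT : IsSpanningTree A T)
    (CD : Finset (V × V)) (hCD : IsUCycle A CD)
    (Ca : V × V → Finset (V × V))
    (hCa : ∀ a ∈ CD \ T, IsFundCycle A T a (Ca a)) :
    CD = foldSymmDiff (CD \ T) Ca := by
  have hTT : ∀ a ∈ T, (a.2, a.1) ∉ T := fun a ha h => hA a (hT.1 ha) (hT.1 h)
  set F := foldSymmDiff (CD \ T) Ca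
  have hF : ∀ b ∉ T, b ∈ F ↔ b ∈ CD \ T := fun b hb =>
    mem_foldSymmDiff_iff fun a ha => (hCa a ha).mem_iff_eq_of_notMem hb
  have hsub : symmDiff CD F ⊆ T := fun b hb => by
    by_contra hbT
    rw [Finset.mem_symmDiff, hF b hbT, Finset.mem_sdiff] at hb
    tauto
  have heven : ∀ v, parityDeg (symmDiff CD F) v = 0 := fun v => by
    rw [parityDeg_symmDiff, parityDeg_eq_zero_of_isUCycle hA hCD,
      parityDeg_foldSymmDiff fun a ha => parityDeg_eq_zero_of_isUCycle hA (hCa a ha).1, add_zero]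
  exact symmDiff_eq_bot.1 (eq_empty_of_subset_spanningTree hT hTT hsub heven)
end
end
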